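/- arXiv:1204.1554 — 12 statements merged into one kernel-verified Lean document; each statement's English description precedes it below -/
import Mathlib

section
/- Let Λ be an extremally disconnected compact Hausdorff space and let (f, W_f) and (g, W_g) be normal functions on Λ. If there exists a subset U of Λ∖(W_f ∪ W_g) which is dense in Λ and satisfies f(x) = g(x) for every x ∈ U, then W_f = W_g and f(x) = g(x) for every x ∈ Λ∖W_f. (Lemma 9) -/
open Filter Topology

/-- A normal function on `Λ` with values in the quaternions: a pair `(f, W)` where
`Λ ∖ W` is open and dense, `f` is continuous on `Λ ∖ W`, and `‖f x‖ → ∞` as `x`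
approaches any point of `W` within `Λ ∖ W`. -/
structure IsNormalFn {Λ : Type*} [TopologicalSpace Λ]
    (f : Λ → Quaternion ℝ) (W : Set Λ) : Prop where
  isOpen_compl : IsOpen Wᶜ
  dense_compl : Dense Wᶜ
  contOn : ContinuousOn f Wᶜ
  tendsto_norm : ∀ y ∈ W, Tendsto (fun x => ‖f x‖) (𝓝[Wᶜ] y) atTop

/-! Both claims are limit arguments along `𝓝[U] y`, a nontrivial filter since `U` is dense:
a normal function blows up along it at its singular points and converges along it elsewhere,
and two functions agreeing on `U` behave identically along it. -/

section

variable {X : Type*} [TopologicalSpace X] {s t U : Set X} {x : X}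

theorem ContinuousWithinAt.eq_of_eqOn_of_mem_closure {Y : Type*} [TopologicalSpace Y]
    [T2Space Y] {f g : X → Y} (hf : ContinuousWithinAt f s x) (hg : ContinuousWithinAt g t x)
    (hUs : U ⊆ s) (hUt : U ⊆ t) (hx : x ∈ closure U) (hfg : Set.EqOn f g U) : f x = g x :=
  haveI := mem_closure_iff_nhdsWithin_neBot.mp hx
  tendsto_nhds_unique (hf.mono hUs) ((hg.mono hUt).congr' hfg.symm.eventuallyEq_nhdsWithin)

theorem ContinuousWithinAt.not_tendsto_norm_atTop_of_eqOn {E : Type*} [SeminormedAddGroup E]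
    {f g : X → E} (hg : ContinuousWithinAt g t x) (hUt : U ⊆ t) (hx : x ∈ closure U)
    (hfg : Set.EqOn f g U) : ¬Tendsto (fun y => ‖f y‖) (𝓝[U] x) atTop :=
  haveI := mem_closure_iff_nhdsWithin_neBot.mp hx
  not_tendsto_atTop_of_tendsto_nhds
    ((hg.mono hUt).norm.congr' (Set.EqOn.eventuallyEq_nhdsWithin fun y hy => by rw [hfg hy]))

end

theorem IsNormalFn.subset_of_eqOn_dense {Λ : Type*} [TopologicalSpace Λ]
    {f g : Λ → Quaternion ℝ} {Wf Wg U : Set Λ} (hf : IsNormalFn f Wf) (hg : IsNormalFn g Wg)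
    (hUf : U ⊆ Wfᶜ) (hUg : U ⊆ Wgᶜ) (hU : Dense U) (hfg : Set.EqOn f g U) : Wf ⊆ Wg := by
  intro y hyf
  by_contra hyg
  exact (hg.contOn y hyg).not_tendsto_norm_atTop_of_eqOn hUg (hU y) hfg
    ((hf.tendsto_norm y hyf).mono_left (nhdsWithin_mono y hUf))

theorem normalFn_eq_of_eqOn_dense_general {Λ : Type*} [TopologicalSpace Λ]
    (f g : Λ → Quaternion ℝ) (Wf Wg : Set Λ)
    (hf : IsNormalFn f Wf) (hg : IsNormalFn g Wg)
    (U : Set Λ) (hU : U ⊆ (Wf ∪ Wg)ᶜ) (hUdense : Dense U)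
    (hfg : ∀ x ∈ U, f x = g x) :
    Wf = Wg ∧ ∀ x ∈ Wfᶜ, f x = g x := by
  have hUf : U ⊆ Wfᶜ := fun x hx hxf => hU hx (Or.inl hxf)
  have hUg : U ⊆ Wgᶜ := fun x hx hxg => hU hx (Or.inr hxg)
  have hW : Wf = Wg := (hf.subset_of_eqOn_dense hg hUf hUg hUdense hfg).antisymm
    (hg.subset_of_eqOn_dense hf hUg hUf hUdense fun x hx => (hfg x hx).symm)
  exact ⟨hW, fun x hx => (hf.contOn x hx).eq_of_eqOn_of_mem_closure (hg.contOn x (hW ▸ hx))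
    hUf hUg (hUdense x) hfg⟩

/-- Lemma 9: two normal functions agreeing on a dense subset of the common domain
coincide (same singular set, same values off it). -/
theorem normalFn_eq_of_eqOn_dense {Λ : Type*} [TopologicalSpace Λ] [CompactSpace Λ]
    [T2Space Λ] [ExtremallyDisconnected Λ] [Nonempty Λ]
    (f g : Λ → Quaternion ℝ) (Wf Wg : Set Λ)
    (hf : IsNormalFn f Wf) (hg : IsNormalFn g Wg)
    (U : Set Λ) (hU : U ⊆ (Wf ∪ Wg)ᶜ) (hUdense : Dense U)
    (hfg : ∀ x ∈ U, f x = g x) :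
    Wf = Wg ∧ ∀ x ∈ Wfᶜ, f x = g x :=
  normalFn_eq_of_eqOn_dense_general f g Wf Wg hf hg U hU hUdense hfg
end

section
/- Let Λ be an extremally disconnected compact Hausdorff space and let θ assign to each bounded Borel function g : Λ → ℍ the unique continuous function θ(g) : Λ → ℍ agreeing with g off a meager set. Then θ is a conjugation-preserving surjective homomorphism from the algebra of bounded Borel ℍ-valued functions onto C(Λ, ℍ): θ(g + h) = θ(g) + θ(h), θ(g·h) = θ(g)·θ(h), θ(a·g·b) = a·θ(g)·b for all constants a, b ∈ ℍ, θ(ḡ) = θ(g)‾ (pointwise quaternionic conjugation), every continuous function Λ → ℍ is in the range of θ, and θ(g) = 0 if and only if g vanishes outside a meager subset of Λ. (Lemma 38, third assertion) -/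
/-!
Agreeing off a meagre set is eventual equality along the residual filter, which is compatible
with the pointwise operations. On a compact Hausdorff space, a Baire space, the complement of a
meagre set is dense, so two continuous functions that agree off a meagre set are equal. Hence
`θ g` is determined by `g` modulo meagre sets, and each identity follows by checking that the
right-hand side is continuous and agrees with the function inside `θ` off a meagre set.
-/

/-- A bounded Borel quaternion-valued function on `Λ` (Borel σ-algebras on both sides). -/
def BddBorel {Λ : Type*} [TopologicalSpace Λ] (g : Λ → Quaternion ℝ) : Prop :=
  (@Measurable Λ (Quaternion ℝ) (borel Λ) (borel (Quaternion ℝ)) g) ∧ ∃ C : ℝ, ∀ x, ‖g x‖ ≤ C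

open Filter

section Residual

variable {X Y : Type*} [TopologicalSpace X]

theorem isMeagre_setOf_ne_iff {f g : X → Y} :
    IsMeagre {x | f x ≠ g x} ↔ f =ᶠ[residual X] g := by
  simp only [IsMeagre, Set.compl_ofPred, not_not]
  rfl

theorem Continuous.ext_of_eventuallyEq_residual [BaireSpace X] [TopologicalSpace Y] [T2Space Y]
    {f g : X → Y} (hf : Continuous f) (hg : Continuous g) (h : f =ᶠ[residual X] g) : f = g :=
  hf.ext_on (dense_of_mem_residual h) hg fun _ hx => hx

end Residual

namespace BddBorel

variable {Λ : Type*} [TopologicalSpace Λ] {g h : Λ → Quaternion ℝ}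

theorem of_continuous [CompactSpace Λ] (hg : Continuous g) : BddBorel g := by
  borelize Λ (Quaternion ℝ)
  obtain ⟨C, hC⟩ := (isCompact_range hg).isBounded.exists_norm_le
  exact ⟨hg.measurable, C, fun x => hC _ ⟨x, rfl⟩⟩

theorem add (hg : BddBorel g) (hh : BddBorel h) : BddBorel (g + h) := by
  borelize Λ (Quaternion ℝ)
  obtain ⟨C, hC⟩ := hg.2
  obtain ⟨D, hD⟩ := hh.2
  exact ⟨hg.1.add hh.1, C + D, fun x => (norm_add_le _ _).trans (add_le_add (hC x) (hD x))⟩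

theorem mul (hg : BddBorel g) (hh : BddBorel h) : BddBorel (g * h) := by
  borelize Λ (Quaternion ℝ)
  obtain ⟨C, hC⟩ := hg.2
  obtain ⟨D, hD⟩ := hh.2
  refine ⟨hg.1.mul hh.1, |C| * D, fun x => ?_⟩
  rw [Pi.mul_apply, norm_mul]
  exact mul_le_mul ((hC x).trans (le_abs_self C)) (hD x) (norm_nonneg _) (abs_nonneg C)

theorem star (hg : BddBorel g) : BddBorel (fun x => star (g x)) := by
  borelize Λ (Quaternion ℝ)
  obtain ⟨C, hC⟩ := hg.2
  exact ⟨continuous_star.measurable.comp hg.1, C, fun x => (norm_star (g x)).trans_le (hC x)⟩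

end BddBorel

theorem theta_eq_of_eventuallyEq {Λ : Type*} [TopologicalSpace Λ] [BaireSpace Λ]
    {θ : (Λ → Quaternion ℝ) → (Λ → Quaternion ℝ)}
    (hθ : ∀ g, BddBorel g → Continuous (θ g) ∧ IsMeagre {x | θ g x ≠ g x})
    {g f : Λ → Quaternion ℝ} (hg : BddBorel g) (hf : Continuous f) (h : f =ᶠ[residual Λ] g) :
    θ g = f :=
  (hθ g hg).1.ext_of_eventuallyEq_residual hf
    ((isMeagre_setOf_ne_iff.1 (hθ g hg).2).trans h.symm)

theorem theta_hom_properties_general {Λ : Type*} [TopologicalSpace Λ]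
    [CompactSpace Λ] [T2Space Λ]
    (θ : (Λ → Quaternion ℝ) → (Λ → Quaternion ℝ))
    (hθ : ∀ g, BddBorel g → Continuous (θ g) ∧ IsMeagre {x | θ g x ≠ g x}) :
    (∀ g h, BddBorel g → BddBorel h → θ (g + h) = θ g + θ h) ∧
    (∀ g h, BddBorel g → BddBorel h → θ (g * h) = θ g * θ h) ∧
    (∀ g, BddBorel g → ∀ a b : Quaternion ℝ,
      θ (fun x => a * g x * b) = fun x => a * θ g x * b) ∧
    (∀ g, BddBorel g → θ (fun x => star (g x)) = fun x => star (θ g x)) ∧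
    (∀ f : Λ → Quaternion ℝ, Continuous f → ∃ g, BddBorel g ∧ θ g = f) ∧
    (∀ g, BddBorel g → (θ g = 0 ↔ IsMeagre {x | g x ≠ 0})) := by
  have hcont g (hg : BddBorel g) : Continuous (θ g) := (hθ g hg).1
  have hae g (hg : BddBorel g) : θ g =ᶠ[residual Λ] g := isMeagre_setOf_ne_iff.1 (hθ g hg).2
  have hmul g h (hg : BddBorel g) (hh : BddBorel h) : θ (g * h) = θ g * θ h :=
    theta_eq_of_eventuallyEq hθ (hg.mul hh) ((hcont g hg).mul (hcont h hh))
      ((hae g hg).mul (hae h hh))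
  have hconst f (hf : Continuous f) : θ f = f :=
    theta_eq_of_eventuallyEq hθ (.of_continuous hf) hf EventuallyEq.rfl
  refine ⟨fun g h hg hh => ?_, hmul, fun g hg a b => ?_, fun g hg => ?_,
    fun f hf => ⟨f, .of_continuous hf, hconst f hf⟩, fun g hg => ?_⟩
  · exact theta_eq_of_eventuallyEq hθ (hg.add hh) ((hcont g hg).add (hcont h hh))
      ((hae g hg).add (hae h hh))
  · have ha : BddBorel fun _ : Λ => a := .of_continuous continuous_const
    have hb : BddBorel fun _ : Λ => b := .of_continuous continuous_const
    change θ ((fun _ => a) * g * fun _ => b) = (fun _ => a) * θ g * fun _ => b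
    rw [hmul _ _ (ha.mul hg) hb, hmul _ _ ha hg, hconst _ continuous_const,
      hconst _ continuous_const]
  · exact theta_eq_of_eventuallyEq hθ hg.star (hcont g hg).star (hae g hg).star
  · rw [isMeagre_setOf_ne_iff]
    exact ⟨fun h0 => (hae g hg).symm.trans (by rw [h0]; rfl),
      fun h => theta_eq_of_eventuallyEq hθ hg continuous_const h.symm⟩

/-- Lemma 38 (third assertion): the map `θ` sending a bounded Borel function to the unique
continuous function agreeing with it off a meager set is a conjugation-preserving surjective
homomorphism onto `C(Λ, ℍ)` whose kernel consists of the bounded Borel functions vanishing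
outside a meager set. -/
theorem theta_hom_properties {Λ : Type*} [TopologicalSpace Λ]
    [CompactSpace Λ] [T2Space Λ] [ExtremallyDisconnected Λ] [Nonempty Λ]
    (θ : (Λ → Quaternion ℝ) → (Λ → Quaternion ℝ))
    (hθ : ∀ g, BddBorel g → Continuous (θ g) ∧ IsMeagre {x | θ g x ≠ g x}) :
    (∀ g h, BddBorel g → BddBorel h → θ (g + h) = θ g + θ h) ∧
    (∀ g h, BddBorel g → BddBorel h → θ (g * h) = θ g * θ h) ∧
    (∀ g, BddBorel g → ∀ a b : Quaternion ℝ,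
      θ (fun x => a * g x * b) = fun x => a * θ g x * b) ∧
    (∀ g, BddBorel g → θ (fun x => star (g x)) = fun x => star (θ g x)) ∧
    (∀ f : Λ → Quaternion ℝ, Continuous f → ∃ g, BddBorel g ∧ θ g = f) ∧
    (∀ g, BddBorel g → (θ g = 0 ↔ IsMeagre {x | g x ≠ 0})) :=
  theta_hom_properties_general θ hθ
end

section
/- Let Λ be an extremally disconnected compact Hausdorff space and let θ assign to each bounded Borel function g : Λ → ℝ the unique continuous function θ(g) : Λ → ℝ agreeing with g off a meager set. If (g_n) is a monotone increasing sequence of bounded Borel real-valued functions on Λ converging pointwise to a bounded Borel function g, then θ(g) is the least upper bound of the sequence (θ(g_n)) in C(Λ, ℝ): θ(g_n)(x) ≤ θ(g)(x) for all n and all x ∈ Λ, and every continuous function h : Λ → ℝ satisfying θ(g_n) ≤ h pointwise for all n satisfies θ(g) ≤ h pointwise. (Lemma 38, σ-normality of θ) -/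
open Filter Topology

/-! Compact Hausdorff spaces are Baire, so the complement of a meagre set is dense and two
continuous functions ordered off a meagre set are ordered everywhere. Off the countably many
meagre exceptional sets of `θ`, both claims become pointwise statements about a monotone limit. -/

/-- A bounded Borel real-valued function on `Λ` (Borel σ-algebra on `Λ`). -/
def BddBorelReal {Λ : Type*} [TopologicalSpace Λ] (g : Λ → ℝ) : Prop :=
  (@Measurable Λ ℝ (borel Λ) _ g) ∧ ∃ C : ℝ, ∀ x, |g x| ≤ C

theorem Continuous.le_of_eventuallyLE_residual {X α : Type*} [TopologicalSpace X] [BaireSpace X]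
    [TopologicalSpace α] [Preorder α] [OrderClosedTopology α] {f g : X → α}
    (hf : Continuous f) (hg : Continuous g) (h : f ≤ᶠ[residual X] g) : f ≤ g :=
  fun x => (isClosed_le hf hg).closure_subset (dense_of_mem_residual h x)

theorem IsMeagre.eventuallyEq_residual {X β : Type*} [TopologicalSpace X] {f g : X → β}
    (h : IsMeagre {x | f x ≠ g x}) : f =ᶠ[residual X] g :=
  mem_of_superset h fun _ => not_not.1

theorem theta_sigma_normal_general {Λ : Type*} [TopologicalSpace Λ]
    [CompactSpace Λ] [T2Space Λ]
    (θ : (Λ → ℝ) → (Λ → ℝ))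
    (hθ : ∀ g, BddBorelReal g → Continuous (θ g) ∧ IsMeagre {x | θ g x ≠ g x})
    (g : ℕ → Λ → ℝ) (glim : Λ → ℝ)
    (hg : ∀ n, BddBorelReal (g n)) (hglim : BddBorelReal glim)
    (hmono : ∀ n x, g n x ≤ g (n + 1) x)
    (hconv : ∀ x, Tendsto (fun n => g n x) atTop (𝓝 (glim x))) :
    (∀ n x, θ (g n) x ≤ θ glim x) ∧
    (∀ h : Λ → ℝ, Continuous h → (∀ n x, θ (g n) x ≤ h x) → ∀ x, θ glim x ≤ h x) := by
  have hθglim : θ glim =ᶠ[residual Λ] glim := (hθ glim hglim).2.eventuallyEq_residual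
  have hθg : ∀ᶠ x in residual Λ, ∀ n, θ (g n) x = g n x :=
    eventually_countable_forall.2 fun n => (hθ (g n) (hg n)).2.eventuallyEq_residual
  have hg_le : ∀ n x, g n x ≤ glim x := fun n x =>
    (monotone_nat_of_le_succ fun m => hmono m x).ge_of_tendsto (hconv x) n
  refine ⟨fun n => (hθ (g n) (hg n)).1.le_of_eventuallyLE_residual (hθ glim hglim).1 ?_,
    fun h hh hgh => (hθ glim hglim).1.le_of_eventuallyLE_residual hh ?_⟩
  · filter_upwards [hθglim, hθg] with x hx hxn
    rw [hx, hxn n]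
    exact hg_le n x
  · filter_upwards [hθglim, hθg] with x hx hxn
    rw [hx]
    exact le_of_tendsto' (hconv x) fun n => hxn n ▸ hgh n x

/-- Lemma 38 (σ-normality of `θ`): if a monotone increasing sequence of bounded Borel
real-valued functions converges pointwise to a bounded Borel function `g`, then `θ g` is the
least upper bound of the `θ (g n)` in `C(Λ, ℝ)`. -/
theorem theta_sigma_normal {Λ : Type*} [TopologicalSpace Λ]
    [CompactSpace Λ] [T2Space Λ] [ExtremallyDisconnected Λ] [Nonempty Λ]
    (θ : (Λ → ℝ) → (Λ → ℝ))
    (hθ : ∀ g, BddBorelReal g → Continuous (θ g) ∧ IsMeagre {x | θ g x ≠ g x})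
    (g : ℕ → Λ → ℝ) (glim : Λ → ℝ)
    (hg : ∀ n, BddBorelReal (g n)) (hglim : BddBorelReal glim)
    (hmono : ∀ n x, g n x ≤ g (n + 1) x)
    (hconv : ∀ x, Tendsto (fun n => g n x) atTop (𝓝 (glim x))) :
    (∀ n x, θ (g n) x ≤ θ glim x) ∧
    (∀ h : Λ → ℝ, Continuous h → (∀ n x, θ (g n) x ≤ h x) → ∀ x, θ glim x ≤ h x) :=
  theta_sigma_normal_general θ hθ g glim hg hglim hmono hconv
end

section
/- Let Λ be an extremally disconnected compact Hausdorff space. For every Borel function g : Λ → ℍ there exists a normal function (f, W_f) on Λ such that the set W_f ∪ {x ∈ Λ∖W_f : f(x) ≠ g(x)} is meager; moreover (f, W_f) is the unique normal function with this property. (Lemma 41, for quaternion values, i.e. the case card(v) ≤ ℵ₀) -/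
/-!
A Borel function has the Baire property, so it is continuous on a residual set `D`.
Compressing `ℍ` onto its open unit ball makes `g` bounded; in an extremally disconnected space
disjoint open sets have disjoint closures, which forces a bounded function continuous on the
dense set `D` to have a unique limit at every point, so it extends to a continuous
`F : Λ → closedBall 0 1`. Decompressing `F` off `W = F ⁻¹' sphere 0 1` gives the normal function.
Two normal functions agreeing on a dense set agree on their common open dense domain, and
blow-up at points of `W` is incompatible with continuity off `W'`, so `W = W'`.
-/

open Filter Topology

open Set Metric OpenPartialHomeomorph

theorem Measurable.exists_mem_residual_continuousOn {X Y : Type*} [TopologicalSpace X]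
    [MeasurableSpace X] [BorelSpace X] [TopologicalSpace Y] [MeasurableSpace Y]
    [OpensMeasurableSpace Y] [SecondCountableTopology Y] {g : X → Y} (hg : Measurable g) :
    ∃ D ∈ residual X, ContinuousOn g D := by
  obtain ⟨b, hbc, -, hb⟩ := TopologicalSpace.exists_countable_basis Y
  have : ∀ s ∈ b, ∃ u, IsOpen u ∧ g ⁻¹' s =ᶠ[residual X] u := fun s hs =>
    (hg (hb.isOpen hs).measurableSet).baireMeasurableSet.residualEq_isOpen
  choose u huo hgu using this
  -- On `D`, each `g ⁻¹' s` with `s` basic is the trace of the open set `u s`.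
  set D := ⋂ s ∈ b, {x | (x ∈ g ⁻¹' s) = (x ∈ u s ‹_›)}
  have hD : ∀ x ∈ D, ∀ s (hs : s ∈ b), (x ∈ g ⁻¹' s) = (x ∈ u s hs) := fun x hx =>
    mem_iInter₂.1 hx
  refine ⟨D, (countable_bInter_mem hbc).2 hgu, fun x hx => ?_⟩
  rw [ContinuousWithinAt, hb.nhds_hasBasis.tendsto_right_iff]
  rintro s ⟨hs, hgx⟩
  have hxu : x ∈ u s hs := hD x hx s hs ▸ hgx
  filter_upwards [mem_nhdsWithin_of_mem_nhds ((huo s hs).mem_nhds hxu), self_mem_nhdsWithin]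
    with y hyu hy
  exact (hD y hy s hs).symm ▸ hyu

section ExtremallyDisconnected

variable {X Y : Type*} [TopologicalSpace X] [ExtremallyDisconnected X] [TopologicalSpace Y]
  {S : Set X} {f : X → Y}

theorem ExtremallyDisconnected.mapClusterPt_nhdsWithin_unique [T2Space Y] (hS : Dense S)
    (hf : ContinuousOn f S) {x : X} {a b : Y} (ha : MapClusterPt a (𝓝[S] x) f)
    (hb : MapClusterPt b (𝓝[S] x) f) : a = b := by
  by_contra hab
  obtain ⟨Va, Vb, hVa, hVb, haV, hbV, hV⟩ := t2_separation hab
  obtain ⟨Ga, hGa, hfGa⟩ := continuousOn_iff'.1 hf Va hVa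
  obtain ⟨Gb, hGb, hfGb⟩ := continuousOn_iff'.1 hf Vb hVb
  have hG : Disjoint Ga Gb := by
    rw [Set.disjoint_iff_inter_eq_empty, ← not_nonempty_iff_eq_empty]
    intro hne
    obtain ⟨z, ⟨hza, hzb⟩, hzS⟩ := hS.inter_open_nonempty _ (hGa.inter hGb) hne
    have hfza : z ∈ f ⁻¹' Va ∩ S := hfGa ▸ ⟨hza, hzS⟩
    have hfzb : z ∈ f ⁻¹' Vb ∩ S := hfGb ▸ ⟨hzb, hzS⟩
    exact hV.ne_of_mem hfza.1 hfzb.1 rfl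
  have mem_closure_of_mapClusterPt {V : Set Y} {G : Set X} {c : Y}
      (hc : MapClusterPt c (𝓝[S] x) f) (hcV : V ∈ 𝓝 c) (hfG : f ⁻¹' V ∩ S = G ∩ S) :
      x ∈ closure G := by
    have : x ∈ closure (f ⁻¹' V ∩ S) :=
      mem_closure_iff_frequently.2 (frequently_nhdsWithin_iff.1 (hc.frequently hcV))
    exact closure_mono inter_subset_left (hfG ▸ this)
  exact (ExtremallyDisconnected.disjoint_closure_of_disjoint_isOpen hG hGa hGb).ne_of_mem
    (mem_closure_of_mapClusterPt ha (hVa.mem_nhds haV) hfGa)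
    (mem_closure_of_mapClusterPt hb (hVb.mem_nhds hbV) hfGb) rfl

theorem ExtremallyDisconnected.exists_continuous_eqOn [T3Space Y] {K : Set Y} (hS : Dense S)
    (hf : ContinuousOn f S) (hK : IsCompact K) (hfK : MapsTo f S K) :
    ∃ F : X → Y, Continuous F ∧ EqOn F f S ∧ ∀ x, F x ∈ K := by
  have hlim : ∀ x, ∃ y, Tendsto f (𝓝[S] x) (𝓝 y) := by
    intro x
    have := mem_closure_iff_nhdsWithin_neBot.1 (hS x)
    have hmem : ∀ᶠ z in 𝓝[S] x, f z ∈ K := eventually_mem_nhdsWithin.mono hfK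
    obtain ⟨y, -, hy⟩ := hK.exists_mapClusterPt (tendsto_principal.2 hmem)
    exact ⟨y, hK.tendsto_nhds_of_unique_mapClusterPt hmem fun z _ hz =>
      mapClusterPt_nhdsWithin_unique hS hf hz hy⟩
  have hF : Continuous (extendFrom S f) := continuousOn_univ.1 <|
    continuousOn_extendFrom (by simp [hS.closure_eq]) fun x _ => hlim x
  refine ⟨extendFrom S f, hF, extendFrom_extends hf, fun x => ?_⟩
  have : extendFrom S f '' S ⊆ K := by
    rintro _ ⟨z, hz, rfl⟩
    exact extendFrom_extends hf z hz ▸ hfK hz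
  exact closure_minimal this hK.isClosed <|
    image_closure_subset_closure_image hF ⟨x, hS.closure_eq ▸ mem_univ x, rfl⟩

end ExtremallyDisconnected

theorem tendsto_norm_univUnitBall_symm {E : Type*} [SeminormedAddCommGroup E] [NormedSpace ℝ E]
    {z : E} (hz : ‖z‖ = 1) :
    Tendsto (fun w => ‖univUnitBall.symm w‖) (𝓝[ball 0 1] z) atTop := by
  simp only [univUnitBall_symm_apply, norm_smul, norm_inv, Real.norm_eq_abs,
    abs_of_nonneg (Real.sqrt_nonneg _)]
  refine Tendsto.atTop_mul_pos one_pos (tendsto_inv_nhdsGT_zero.comp ?_) ?_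
  · refine tendsto_nhdsWithin_iff.2 ⟨?_, ?_⟩
    · have : Continuous fun w : E => √(1 - ‖w‖ ^ 2) := by fun_prop
      simpa [hz] using this.continuousWithinAt.tendsto (s := ball 0 1) (x := z)
    · filter_upwards [self_mem_nhdsWithin] with w hw
      rw [mem_ball_zero_iff] at hw
      exact Real.sqrt_pos.2 (by nlinarith [norm_nonneg w])
  · simpa [hz] using continuous_norm.continuousWithinAt.tendsto (s := ball 0 1) (x := z)

section NormalFn

variable {Λ : Type*} [TopologicalSpace Λ]

theorem exists_isNormalFn_eqOn_of_continuousOn [ExtremallyDisconnected Λ] {D : Set Λ}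
    {g : Λ → Quaternion ℝ} (hD : Dense D) (hg : ContinuousOn g D) :
    ∃ f W, IsNormalFn f W ∧ D ⊆ Wᶜ ∧ EqOn f g D := by
  let e : OpenPartialHomeomorph (Quaternion ℝ) (Quaternion ℝ) := univUnitBall
  have he_target : e.target = ball 0 1 := univUnitBall_target
  have he : MapsTo e univ (ball 0 1) := fun v hv => he_target ▸ e.map_source hv
  obtain ⟨F, hF, hFg, hF1⟩ := ExtremallyDisconnected.exists_continuous_eqOn hD
    (e.continuousOn.comp hg fun _ _ => mem_univ _) (isCompact_closedBall 0 1)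
    (fun x _ => ball_subset_closedBall (he (mem_univ (g x))))
  have hW : (F ⁻¹' sphere 0 1)ᶜ = F ⁻¹' ball 0 1 := by
    ext x
    have := mem_closedBall_zero_iff.1 (hF1 x)
    simp only [mem_compl_iff, mem_preimage, mem_sphere_zero_iff_norm, mem_ball_zero_iff]
    exact ⟨fun h => lt_of_le_of_ne this h, ne_of_lt⟩
  have hDW : D ⊆ F ⁻¹' ball 0 1 := fun x hx => by
    simpa only [mem_preimage, hFg hx, Function.comp_apply] using he (mem_univ (g x))
  refine ⟨e.symm ∘ F, F ⁻¹' sphere 0 1, ⟨?_, ?_, ?_, fun y hy => ?_⟩, hW ▸ hDW, fun x hx => ?_⟩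
  · exact hW ▸ isOpen_ball.preimage hF
  · exact hW ▸ hD.mono hDW
  · rw [hW]
    exact (he_target ▸ e.continuousOn_symm).comp hF.continuousOn fun x hx => hx
  · rw [hW]
    exact (tendsto_norm_univUnitBall_symm (mem_sphere_zero_iff_norm.1 hy)).comp
      (tendsto_nhdsWithin_iff.2 ⟨hF.continuousWithinAt.tendsto, self_mem_nhdsWithin⟩)
  · simp only [Function.comp_apply, hFg hx]
    exact e.left_inv (mem_univ _)

theorem IsNormalFn.subset_of_eqOn {f f' : Λ → Quaternion ℝ} {W W' : Set Λ} (hf : IsNormalFn f W)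
    (hf' : IsNormalFn f' W') (h : EqOn f f' (Wᶜ ∩ W'ᶜ)) : W ⊆ W' := by
  intro y hy
  by_contra hy'
  have : (𝓝[Wᶜ ∩ W'ᶜ] y).NeBot := mem_closure_iff_nhdsWithin_neBot.1 <|
    inter_comm W'ᶜ Wᶜ ▸ hf.dense_compl.open_subset_closure_inter hf'.isOpen_compl hy'
  have hlim : Tendsto (fun x => ‖f' x‖) (𝓝[Wᶜ ∩ W'ᶜ] y) (𝓝 ‖f' y‖) :=
    ((hf'.contOn y hy').norm).mono_left (nhdsWithin_mono _ inter_subset_right)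
  refine not_tendsto_atTop_of_tendsto_nhds hlim ?_
  refine ((hf.tendsto_norm y hy).mono_left (nhdsWithin_mono _ inter_subset_left)).congr' ?_
  filter_upwards [self_mem_nhdsWithin] with x hx
  rw [h hx]

theorem IsNormalFn.eq_of_eqOn_dense {f f' : Λ → Quaternion ℝ} {W W' : Set Λ} {E : Set Λ}
    (hf : IsNormalFn f W) (hf' : IsNormalFn f' W') (hE : Dense E)
    (h : EqOn f f' (Wᶜ ∩ W'ᶜ ∩ E)) : W = W' ∧ EqOn f f' Wᶜ := by
  have hopen : IsOpen (Wᶜ ∩ W'ᶜ) := hf.isOpen_compl.inter hf'.isOpen_compl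
  have heq : EqOn f f' (Wᶜ ∩ W'ᶜ) := h.of_subset_closure (hf.contOn.mono inter_subset_left)
    (hf'.contOn.mono inter_subset_right) inter_subset_left (hE.open_subset_closure_inter hopen)
  have hW : W = W' := (hf.subset_of_eqOn hf' heq).antisymm
    (hf'.subset_of_eqOn hf (fun x hx => (heq ⟨hx.2, hx.1⟩).symm))
  subst hW
  exact ⟨rfl, by simpa only [inter_self] using heq⟩

end NormalFn

theorem exists_unique_normalFn_eq_off_meagre_general {Λ : Type*} [TopologicalSpace Λ]
    [CompactSpace Λ] [T2Space Λ] [ExtremallyDisconnected Λ]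
    (g : Λ → Quaternion ℝ)
    (hgBorel : @Measurable Λ (Quaternion ℝ) (borel Λ) (borel (Quaternion ℝ)) g) :
    ∃ (f : Λ → Quaternion ℝ) (W : Set Λ), IsNormalFn f W ∧
      IsMeagre (W ∪ {x | x ∈ Wᶜ ∧ f x ≠ g x}) ∧
      ∀ (f' : Λ → Quaternion ℝ) (W' : Set Λ), IsNormalFn f' W' →
        IsMeagre (W' ∪ {x | x ∈ W'ᶜ ∧ f' x ≠ g x}) →
        W' = W ∧ ∀ x ∈ Wᶜ, f' x = f x := by
  borelize Λ (Quaternion ℝ)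
  obtain ⟨D, hD, hgD⟩ := hgBorel.exists_mem_residual_continuousOn
  obtain ⟨f, W, hf, hDW, hfg⟩ :=
    exists_isNormalFn_eqOn_of_continuousOn (dense_of_mem_residual hD) hgD
  have hmeagre : IsMeagre (W ∪ {x | x ∈ Wᶜ ∧ f x ≠ g x}) := by
    refine IsMeagre.mono ?_ (show IsMeagre Dᶜ by rwa [IsMeagre, compl_compl])
    rintro x (hxW | ⟨-, hfx⟩) hxD
    exacts [hDW hxD hxW, hfx (hfg hxD)]
  refine ⟨f, W, hf, hmeagre, fun f' W' hf' hmeagre' => ?_⟩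
  have hagree : EqOn f f' (Wᶜ ∩ W'ᶜ ∩
      (W ∪ {x | x ∈ Wᶜ ∧ f x ≠ g x} ∪ (W' ∪ {x | x ∈ W'ᶜ ∧ f' x ≠ g x}))ᶜ) := by
    rintro x ⟨⟨hxW, hxW'⟩, hx⟩
    have hfx : f x = g x := not_not.1 fun h => hx (.inl (.inr ⟨hxW, h⟩))
    have hf'x : f' x = g x := not_not.1 fun h => hx (.inr (.inr ⟨hxW', h⟩))
    exact hfx.trans hf'x.symm
  obtain ⟨hW, hff'⟩ :=
    hf.eq_of_eqOn_dense hf' (dense_of_mem_residual (hmeagre.union hmeagre')) hagree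
  exact ⟨hW.symm, fun x hx => (hff' hx).symm⟩

/-- Lemma 41 (quaternion values): every Borel quaternion-valued function on an extremally
disconnected compact Hausdorff space agrees off a meager set with a unique normal function. -/
theorem exists_unique_normalFn_eq_off_meagre {Λ : Type*} [TopologicalSpace Λ]
    [CompactSpace Λ] [T2Space Λ] [ExtremallyDisconnected Λ] [Nonempty Λ]
    (g : Λ → Quaternion ℝ)
    (hgBorel : @Measurable Λ (Quaternion ℝ) (borel Λ) (borel (Quaternion ℝ)) g) :
    ∃ (f : Λ → Quaternion ℝ) (W : Set Λ), IsNormalFn f W ∧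
      IsMeagre (W ∪ {x | x ∈ Wᶜ ∧ f x ≠ g x}) ∧
      ∀ (f' : Λ → Quaternion ℝ) (W' : Set Λ), IsNormalFn f' W' →
        IsMeagre (W' ∪ {x | x ∈ W'ᶜ ∧ f' x ≠ g x}) →
        W' = W ∧ ∀ x ∈ Wᶜ, f' x = f x :=
  exists_unique_normalFn_eq_off_meagre_general g hgBorel
end

section
/- Let Λ be an extremally disconnected compact Hausdorff space and let (ξ, W_ξ) be a normal function on Λ. Then there exists a continuous function q : Λ → ℍ with |q(x)| = 1 for every x ∈ Λ and q(x)·|ξ(x)| = ξ(x) for every x ∈ Λ∖W_ξ. (polar decomposition of a normal function, established in the proof of Theorem 29) -/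
open Filter Topology

/-!
Off the zeros of `ξ`, the only candidate is `q = ξ / |ξ|`, which is continuous on the open set
`V` where `ξ` is defined and nonzero; on the exterior of `V` put `q = 1`. This gives a continuous
sphere-valued function on the dense open set `V ∪ (closure V)ᶜ`. In an extremally disconnected
compact space such a function extends continuously: the closure `G` of its graph is compact,
projects onto the space, and agrees with the graph over the dense set, so a section of the
projection `G → Λ`, which exists by Gleason's projectivity theorem, is the extension.
-/

open Set

universe u v

lemma dense_union_compl_closure {X : Type*} [TopologicalSpace X] (s : Set X) :
    Dense (s ∪ (closure s)ᶜ) := by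
  refine dense_iff_closure_eq.2 (eq_univ_of_univ_subset ?_)
  calc univ = closure s ∪ (closure s)ᶜ := (union_compl_self _).symm
    _ ⊆ closure (s ∪ (closure s)ᶜ) := by
      rw [closure_union]
      exact union_subset_union_right _ subset_closure

lemma IsOpen.continuousOn_piecewise_union_compl_closure {X Y : Type*} [TopologicalSpace X]
    [TopologicalSpace Y] {s : Set X} [∀ x, Decidable (x ∈ s)] {f g : X → Y} (hs : IsOpen s)
    (hf : ContinuousOn f s) (hg : ContinuousOn g (closure s)ᶜ) :
    ContinuousOn (s.piecewise f g) (s ∪ (closure s)ᶜ) :=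
  (hf.congr fun _ hx => s.piecewise_eq_of_mem _ _ hx).union_of_isOpen
    (hg.congr fun _ hx => s.piecewise_eq_of_notMem _ _ fun h => hx (subset_closure h))
    hs isClosed_closure.isOpen_compl

lemma snd_eq_of_mem_closure_graph {X Y : Type*} [TopologicalSpace X] [TopologicalSpace Y]
    [T2Space Y] {f : X → Y} {s : Set X} {p : X × Y}
    (hp : p ∈ closure ((fun x => (x, f x)) '' s)) (hf : ContinuousAt f p.1) : p.2 = f p.1 := by
  set ψ : X × Y → Y × Y := fun q => (f q.1, q.2)
  have hψ : ContinuousAt ψ p := (hf.comp continuousAt_fst).prodMk continuousAt_snd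
  have hdiag : ψ '' ((fun x => (x, f x)) '' s) ⊆ diagonal Y := by
    rintro _ ⟨_, ⟨x, -, rfl⟩, rfl⟩
    rfl
  exact (closure_minimal hdiag isClosed_diagonal (mem_closure_image hψ hp)).symm

/-- The universe constraint comes from `CompactT2.Projective`, which only lifts through
surjections between spaces in the universe of `X`. -/
theorem ExtremallyDisconnected.exists_continuous_extension {X : Type max u v} {Y : Type v}
    [TopologicalSpace X] [CompactSpace X] [T2Space X] [ExtremallyDisconnected X]
    [TopologicalSpace Y] [T2Space Y] {D : Set X} (hD : Dense D) {K : Set Y} (hK : IsCompact K)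
    {f : X → Y} (hf : ∀ x ∈ D, ContinuousAt f x) (hfK : MapsTo f D K) :
    ∃ g : X → Y, Continuous g ∧ (∀ x, g x ∈ K) ∧ EqOn g f D := by
  set G : Set (X × Y) := closure ((fun x => (x, f x)) '' D)
  have hGK : G ⊆ univ ×ˢ K :=
    closure_minimal (by rintro _ ⟨x, hx, rfl⟩; exact ⟨trivial, hfK hx⟩)
      (isClosed_univ.prod hK.isClosed)
  have hG : IsCompact G := (isCompact_univ.prod hK).of_isClosed_subset isClosed_closure hGK
  have : CompactSpace G := isCompact_iff_compactSpace.1 hG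
  set π : G → X := fun p => p.1.1
  have hπ : Continuous π := continuous_fst.comp continuous_subtype_val
  have hπ_surj : Function.Surjective π := by
    have hrange : range π = Prod.fst '' G := by
      simp only [π, range_comp' Prod.fst Subtype.val, Subtype.range_coe]
    have hD_sub : D ⊆ range π := fun x hx => ⟨⟨(x, f x), subset_closure ⟨x, hx, rfl⟩⟩, rfl⟩
    rw [← range_eq_univ, ← (hD.mono hD_sub).closure_eq, hrange,
      (hG.image continuous_fst).isClosed.closure_eq]
  obtain ⟨σ, hσ, hπσ⟩ :=
    CompactT2.ExtremallyDisconnected.projective continuous_id hπ hπ_surj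
  refine ⟨fun x => (σ x).1.2, continuous_snd.comp (continuous_subtype_val.comp hσ),
    fun x => (hGK (σ x).2).2, fun x hx => ?_⟩
  have hσx : (σ x).1.1 = x := congrFun hπσ x
  have := snd_eq_of_mem_closure_graph (σ x).2 (by rw [hσx]; exact hf x hx)
  rwa [hσx] at this

theorem normalFn_polar_decomposition_general {Λ : Type*} [TopologicalSpace Λ]
    [CompactSpace Λ] [T2Space Λ] [ExtremallyDisconnected Λ]
    (ξ : Λ → Quaternion ℝ) (W : Set Λ) (hξ : IsNormalFn ξ W) :
    ∃ q : Λ → Quaternion ℝ, Continuous q ∧ (∀ x, ‖q x‖ = 1) ∧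
      ∀ x ∈ Wᶜ, q x * ((‖ξ x‖ : ℝ) : Quaternion ℝ) = ξ x := by
  classical
  set V : Set Λ := Wᶜ ∩ ξ ⁻¹' {0}ᶜ
  have hV : IsOpen V := hξ.contOn.isOpen_inter_preimage hξ.isOpen_compl isOpen_compl_singleton
  have hξV : ContinuousOn ξ V := hξ.contOn.mono inter_subset_left
  set u : Λ → Quaternion ℝ := V.piecewise (fun x => (‖ξ x‖⁻¹ : ℝ) • ξ x) 1
  have hu_V : ∀ x ∈ V, u x = (‖ξ x‖⁻¹ : ℝ) • ξ x := fun x hx => V.piecewise_eq_of_mem _ _ hx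
  have hu : ContinuousOn u (V ∪ (closure V)ᶜ) := hV.continuousOn_piecewise_union_compl_closure
    ((hξV.norm.inv₀ fun x hx => norm_ne_zero_iff.2 hx.2).smul hξV) continuousOn_const
  have hu_sphere : MapsTo u (V ∪ (closure V)ᶜ) (Metric.sphere 0 1) := by
    intro x _
    by_cases hx : x ∈ V
    · simpa [hu_V x hx] using norm_smul_inv_norm (𝕜 := ℝ) hx.2
    · rw [show u x = 1 from V.piecewise_eq_of_notMem _ _ hx]
      simp
  obtain ⟨q, hq, hq_sphere, hqu⟩ := ExtremallyDisconnected.exists_continuous_extension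
    (dense_union_compl_closure V) (isCompact_sphere 0 1)
    (fun x hx => hu.continuousAt ((hV.union isClosed_closure.isOpen_compl).mem_nhds hx)) hu_sphere
  refine ⟨q, hq, fun x => by simpa using hq_sphere x, fun x hx => ?_⟩
  by_cases hξx : ξ x = 0
  · simp [hξx]
  · rw [hqu (Or.inl ⟨hx, hξx⟩), hu_V x ⟨hx, hξx⟩,
      Quaternion.mul_coe_eq_smul, smul_smul, mul_inv_cancel₀ (norm_ne_zero_iff.2 hξx), one_smul]

/-- Polar decomposition of a normal function (proof of Theorem 29): there is a continuous
unit-norm function `q : Λ → ℍ` with `q x * |ξ x| = ξ x` on the domain of `ξ`. -/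
theorem normalFn_polar_decomposition {Λ : Type*} [TopologicalSpace Λ]
    [CompactSpace Λ] [T2Space Λ] [ExtremallyDisconnected Λ] [Nonempty Λ]
    (ξ : Λ → Quaternion ℝ) (W : Set Λ) (hξ : IsNormalFn ξ W) :
    ∃ q : Λ → Quaternion ℝ, Continuous q ∧ (∀ x, ‖q x‖ = 1) ∧
      ∀ x ∈ Wᶜ, q x * ((‖ξ x‖ : ℝ) : Quaternion ℝ) = ξ x :=
  normalFn_polar_decomposition_general ξ W hξ
end

section
/- Let Λ be an extremally disconnected compact Hausdorff space and let (Λ_b)_{b∈ℝ} be a family of clopen subsets of Λ with Λ_a ⊆ Λ_b whenever a ≤ b, such that ⋃_{b∈ℝ} Λ_b is dense in Λ and ⋂_{b∈ℝ} Λ_b has empty interior. Put W₊ := Λ∖⋃_b Λ_b, W₋ := ⋂_b Λ_b and W := W₊ ∪ W₋. Then W is closed and nowhere dense in Λ; for each x ∈ Λ∖W the infimum h(x) := inf{b ∈ ℝ : x ∈ Λ_b} exists in ℝ; the function h : Λ∖W → ℝ is continuous; h(y) → +∞ as y → x within Λ∖W for each x ∈ W₊, and h(y) → −∞ as y → x within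 Λ∖W for each x ∈ W₋. In particular (h, W) is a self-adjoint function on Λ. (topological core of Lemma 13) -/
open Filter Topology

/-!
Off `W`, the set `{b | x ∈ L b}` is a nonempty, bounded below upper set of `ℝ`, so
`h x < b → x ∈ L b` and `x ∈ L b → h x ≤ b`. Hence `L b` being open makes `h` upper
semicontinuous and `L b` being closed makes it lower semicontinuous. Near a point of `W₊` every
point lies outside the closed set `L b`, forcing `h ≥ b`; near a point of `W₋` every point lies
in the open set `L b`, forcing `h ≤ b`. Finally `W₊` and `W₋` are closed with empty interior.
-/

/-- A self-adjoint (real-valued normal) function on `Λ`: a pair `(h, W)` where `Λ ∖ W` is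
open and dense, `h` is continuous on `Λ ∖ W`, and `|h x| → ∞` as `x` approaches any point
of `W` within `Λ ∖ W`. -/
structure IsSelfAdjointFn {Λ : Type*} [TopologicalSpace Λ]
    (h : Λ → ℝ) (W : Set Λ) : Prop where
  isOpen_compl : IsOpen Wᶜ
  dense_compl : Dense Wᶜ
  contOn : ContinuousOn h Wᶜ
  tendsto_abs : ∀ y ∈ W, Tendsto (fun x => |h x|) (𝓝[Wᶜ] y) atTop

section MonotoneSetFamily

variable {X : Type*} {L : ℝ → Set X} {x : X} {b : ℝ}

theorem bddBelow_setOf_mem_of_notMem_iInter (hL : Monotone L) (hx : x ∉ ⋂ b, L b) :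
    BddBelow {b | x ∈ L b} := by
  obtain ⟨a, ha⟩ : ∃ a, x ∉ L a := by simpa using hx
  exact ⟨a, fun c hc => le_of_not_gt fun hac => ha (hL hac.le hc)⟩

theorem le_sInf_setOf_mem_of_notMem (hL : Monotone L) (hx : x ∈ ⋃ b, L b) (hb : x ∉ L b) :
    b ≤ sInf {b | x ∈ L b} :=
  le_csInf (Set.mem_iUnion.mp hx) fun _ hc => le_of_not_gt fun hbc => hb (hL hbc.le hc)

theorem mem_of_sInf_setOf_mem_lt (hL : Monotone L) (hx : x ∈ ⋃ b, L b)
    (hb : sInf {b | x ∈ L b} < b) : x ∈ L b := by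
  obtain ⟨c, hc, hcb⟩ := exists_lt_of_csInf_lt (Set.mem_iUnion.mp hx) hb
  exact hL hcb.le hc

variable [TopologicalSpace X]

theorem continuousOn_sInf_setOf_mem (hL : Monotone L) (hclopen : ∀ b, IsClopen (L b)) :
    ContinuousOn (fun x => sInf {b | x ∈ L b}) ((⋃ b, L b) \ ⋂ b, L b) := by
  intro x hx
  refine tendsto_order.2 ⟨fun a ha => ?_, fun a ha => ?_⟩
  · obtain ⟨a', haa', ha'⟩ := exists_between ha
    have hxa' : x ∉ L a' := fun hxa' =>
      (csInf_le (bddBelow_setOf_mem_of_notMem_iInter hL hx.2) hxa').not_gt ha'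
    filter_upwards [mem_nhdsWithin_of_mem_nhds
      ((hclopen a').isClosed.isOpen_compl.mem_nhds hxa'), self_mem_nhdsWithin] with y hya' hy
    exact haa'.trans_le (le_sInf_setOf_mem_of_notMem hL hy.1 hya')
  · obtain ⟨a', ha', haa'⟩ := exists_between ha
    have hxa' : x ∈ L a' := mem_of_sInf_setOf_mem_lt hL hx.1 ha'
    filter_upwards [mem_nhdsWithin_of_mem_nhds ((hclopen a').isOpen.mem_nhds hxa'),
      self_mem_nhdsWithin] with y hya' hy
    exact (csInf_le (bddBelow_setOf_mem_of_notMem_iInter hL hy.2) hya').trans_lt haa'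

theorem tendsto_sInf_setOf_mem_atTop (hL : Monotone L) (hclosed : ∀ b, IsClosed (L b))
    (hx : x ∉ ⋃ b, L b) :
    Tendsto (fun x => sInf {b | x ∈ L b}) (𝓝[(⋃ b, L b) \ ⋂ b, L b] x) atTop := by
  refine tendsto_atTop.2 fun b => ?_
  have hxb : x ∉ L b := fun hxb => hx (Set.mem_iUnion_of_mem b hxb)
  filter_upwards [mem_nhdsWithin_of_mem_nhds ((hclosed b).isOpen_compl.mem_nhds hxb),
    self_mem_nhdsWithin] with y hyb hy
  exact le_sInf_setOf_mem_of_notMem hL hy.1 hyb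

theorem tendsto_sInf_setOf_mem_atBot (hL : Monotone L) (hopen : ∀ b, IsOpen (L b))
    (hx : x ∈ ⋂ b, L b) :
    Tendsto (fun x => sInf {b | x ∈ L b}) (𝓝[(⋃ b, L b) \ ⋂ b, L b] x) atBot := by
  refine tendsto_atBot.2 fun b => ?_
  filter_upwards [mem_nhdsWithin_of_mem_nhds ((hopen b).mem_nhds (Set.mem_iInter.mp hx b)),
    self_mem_nhdsWithin] with y hyb hy
  exact csInf_le (bddBelow_setOf_mem_of_notMem_iInter hL hy.2) hyb

end MonotoneSetFamily

theorem selfAdjointFn_of_clopen_resolution_general {Λ : Type*} [TopologicalSpace Λ]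
    (L : ℝ → Set Λ) (hclopen : ∀ b, IsClopen (L b))
    (hmono : ∀ a b : ℝ, a ≤ b → L a ⊆ L b)
    (hdense : Dense (⋃ b, L b))
    (hint : interior (⋂ b, L b) = ∅) :
    let Wp := (⋃ b, L b)ᶜ
    let Wm := ⋂ b, L b
    let W := Wp ∪ Wm
    let h := fun x => sInf {b : ℝ | x ∈ L b}
    IsClosed W ∧ IsNowhereDense W ∧
    (∀ x ∈ Wᶜ, {b : ℝ | x ∈ L b}.Nonempty ∧ BddBelow {b : ℝ | x ∈ L b}) ∧
    ContinuousOn h Wᶜ ∧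
    (∀ x ∈ Wp, Tendsto h (𝓝[Wᶜ] x) atTop) ∧
    (∀ x ∈ Wm, Tendsto h (𝓝[Wᶜ] x) atBot) ∧
    IsSelfAdjointFn h W := by
  intro Wp Wm W h
  have hL : Monotone L := hmono
  have hWc : Wᶜ = (⋃ b, L b) \ ⋂ b, L b := by
    simp only [W, Wp, Wm, Set.compl_union, compl_compl, Set.sdiff_eq]
  have hWpclosed : IsClosed Wp := (isOpen_iUnion fun b => (hclopen b).isOpen).isClosed_compl
  have hWclosed : IsClosed W := hWpclosed.union (isClosed_iInter fun b => (hclopen b).isClosed)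
  have hWint : interior W = ∅ := by
    rw [interior_union_isClosed_of_interior_empty hWpclosed hint, interior_compl,
      hdense.closure_eq, Set.compl_univ]
  have hcont : ContinuousOn h Wᶜ := hWc ▸ continuousOn_sInf_setOf_mem hL hclopen
  have hatTop : ∀ x ∈ Wp, Tendsto h (𝓝[Wᶜ] x) atTop := fun x hx =>
    hWc ▸ tendsto_sInf_setOf_mem_atTop hL (fun b => (hclopen b).isClosed) hx
  have hatBot : ∀ x ∈ Wm, Tendsto h (𝓝[Wᶜ] x) atBot := fun x hx =>
    hWc ▸ tendsto_sInf_setOf_mem_atBot hL (fun b => (hclopen b).isOpen) hx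
  refine ⟨hWclosed, hWclosed.isNowhereDense_iff.2 hWint, fun x hx => ?_, hcont, hatTop, hatBot,
    hWclosed.isOpen_compl, interior_eq_empty_iff_dense_compl.1 hWint, hcont, ?_⟩
  · rw [hWc] at hx
    exact ⟨Set.mem_iUnion.mp hx.1, bddBelow_setOf_mem_of_notMem_iInter hL hx.2⟩
  · rintro y (hy | hy)
    · exact tendsto_abs_atTop_atTop.comp (hatTop y hy)
    · exact tendsto_abs_atBot_atTop.comp (hatBot y hy)

/-- Topological core of Lemma 13: a monotone family of clopen sets `Λ_b` with dense union and
intersection of empty interior determines a self-adjoint function `h x = inf {b | x ∈ Λ_b}`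
off the closed nowhere dense set `W = W₊ ∪ W₋`. -/
theorem selfAdjointFn_of_clopen_resolution {Λ : Type*} [TopologicalSpace Λ]
    [CompactSpace Λ] [T2Space Λ] [ExtremallyDisconnected Λ] [Nonempty Λ]
    (L : ℝ → Set Λ) (hclopen : ∀ b, IsClopen (L b))
    (hmono : ∀ a b : ℝ, a ≤ b → L a ⊆ L b)
    (hdense : Dense (⋃ b, L b))
    (hint : interior (⋂ b, L b) = ∅) :
    let Wp := (⋃ b, L b)ᶜ
    let Wm := ⋂ b, L b
    let W := Wp ∪ Wm
    let h := fun x => sInf {b : ℝ | x ∈ L b}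
    IsClosed W ∧ IsNowhereDense W ∧
    (∀ x ∈ Wᶜ, {b : ℝ | x ∈ L b}.Nonempty ∧ BddBelow {b : ℝ | x ∈ L b}) ∧
    ContinuousOn h Wᶜ ∧
    (∀ x ∈ Wp, Tendsto h (𝓝[Wᶜ] x) atTop) ∧
    (∀ x ∈ Wm, Tendsto h (𝓝[Wᶜ] x) atBot) ∧
    IsSelfAdjointFn h W :=
  selfAdjointFn_of_clopen_resolution_general L hclopen hmono hdense hint
end

section
/- Let Λ be an extremally disconnected compact Hausdorff space and let (h, W) be a self-adjoint function on Λ. Let W₊ := {y ∈ W : h(x) → +∞ as x → y within Λ∖W} and W₋ := {y ∈ W : h(x) → −∞ as x → y within Λ∖W}, and assume W = W₊ ∪ W₋. For b ∈ ℝ set U_b := {x ∈ Λ∖W : h(x) > b}, V_b := U_b ∪ W₊ and Λ_b := Λ∖cl(V_b). Then V_b is open in Λ, Λ_b is clopen in Λ, h(x) ≤ b for every x ∈ Λ_b∖W, Λ_b ∩ W = W₋, and Λ_b is the largest such clopen set: every clopen K ⊆ Λ satisfying h(x) ≤ b for all x ∈ K∖W and K ∩ W₊ = ∅ is contained in Λ_b.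 (claim established in the proofs of Lemma 10 and Theorem 16(e)) -/
/-!
Write `A_b` for the set of points `x` near which `h > b` eventually holds within `Λ ∖ W`, and
`B_b` for the set of points near which `h ≤ b` eventually holds. Both are open, and they are
disjoint because `Λ ∖ W` is dense. Continuity of `h` on `Λ ∖ W` and the dichotomy
`W = W₊ ∪ W₋` identify `V_b` with `A_b`, so `V_b` is open and, `Λ` being extremally
disconnected, `cl V_b` is clopen. The open set `B_b` contains `W₋` and misses `cl V_b`,
while every open set disjoint from `V_b` misses `cl V_b`; this gives both the description
of `Λ_b ∩ W` and the maximality of `Λ_b`.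
-/

open Filter Topology Set

section EventuallyWithin

variable {X : Type*} [TopologicalSpace X] {S : Set X}

theorem isOpen_setOfPred_eventually_nhdsWithin_set (p : X → Prop) :
    IsOpen {x | ∀ᶠ z in 𝓝[S] x, p z} := by
  simp only [eventually_nhdsWithin_iff]
  exact isOpen_setOfPred_eventually_nhds

theorem Dense.disjoint_setOf_eventually_nhdsWithin_not (hS : Dense S) (p : X → Prop) :
    Disjoint {x | ∀ᶠ z in 𝓝[S] x, p z} {x | ∀ᶠ z in 𝓝[S] x, ¬p z} := by
  rw [Set.disjoint_left]
  rintro x (hp : ∀ᶠ z in 𝓝[S] x, p z) (hnp : ∀ᶠ z in 𝓝[S] x, ¬p z)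
  have := mem_closure_iff_nhdsWithin_neBot.1 (hS x)
  obtain ⟨z, hz, hnz⟩ := (hp.and hnp).exists
  exact hnz hz

theorem ContinuousWithinAt.eventually_nhdsWithin_lt_iff {f : X → ℝ} {x : X} {b : ℝ}
    (hf : ContinuousWithinAt f S x) (hx : x ∈ S) :
    (∀ᶠ z in 𝓝[S] x, b < f z) ↔ b < f x :=
  ⟨fun h => h.self_of_nhdsWithin hx, fun h => hf.eventually (lt_mem_nhds h)⟩

theorem setOf_lt_union_setOf_tendsto_atTop_eq {W : Set X} {f : X → ℝ} (hW : Dense Wᶜ)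
    (hf : ContinuousOn f Wᶜ)
    (hdich : ∀ y ∈ W, Tendsto f (𝓝[Wᶜ] y) atTop ∨ Tendsto f (𝓝[Wᶜ] y) atBot)
    (b : ℝ) :
    {x | x ∈ Wᶜ ∧ b < f x} ∪ {y | y ∈ W ∧ Tendsto f (𝓝[Wᶜ] y) atTop} =
      {x | ∀ᶠ z in 𝓝[Wᶜ] x, b < f z} := by
  ext x
  by_cases hx : x ∈ W
  · have hU : x ∉ {x | x ∈ Wᶜ ∧ b < f x} := fun h => h.1 hx
    simp only [mem_union, hU, false_or, mem_ofPred_eq, hx, true_and]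
    refine ⟨fun h => h.eventually (eventually_gt_atTop b), fun hA => ?_⟩
    refine (hdich x hx).resolve_right fun hbot => ?_
    have hB : ∀ᶠ z in 𝓝[Wᶜ] x, ¬b < f z :=
      (hbot.eventually (eventually_le_atBot b)).mono fun _ => not_lt.2
    exact Set.disjoint_left.1 (hW.disjoint_setOf_eventually_nhdsWithin_not _) hA hB
  · have hWp : x ∉ {y | y ∈ W ∧ Tendsto f (𝓝[Wᶜ] y) atTop} := fun h => hx h.1
    simp only [mem_union, hWp, or_false, mem_ofPred_eq, mem_compl_iff, hx, not_false_eq_true,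
      true_and]
    exact ((hf x hx).eventually_nhdsWithin_lt_iff hx).symm

end EventuallyWithin

theorem selfAdjointFn_largest_clopen_level_set_general {Λ : Type*} [TopologicalSpace Λ]
    [ExtremallyDisconnected Λ]
    (h : Λ → ℝ) (W : Set Λ) (hsa : IsSelfAdjointFn h W)
    (Wp Wm : Set Λ)
    (hWp : Wp = {y | y ∈ W ∧ Tendsto h (𝓝[Wᶜ] y) atTop})
    (hWm : Wm = {y | y ∈ W ∧ Tendsto h (𝓝[Wᶜ] y) atBot})
    (hW : W = Wp ∪ Wm) (b : ℝ) :
    let U := {x | x ∈ Wᶜ ∧ b < h x}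
    let V := U ∪ Wp
    let Lb := (closure V)ᶜ
    IsOpen V ∧ IsClopen Lb ∧ (∀ x ∈ Lb \ W, h x ≤ b) ∧ Lb ∩ W = Wm ∧
    (∀ K : Set Λ, IsClopen K → (∀ x ∈ K \ W, h x ≤ b) → K ∩ Wp = ∅ → K ⊆ Lb) := by
  subst hWp
  intro U V Lb
  have hV : V = {x | ∀ᶠ z in 𝓝[Wᶜ] x, b < h z} :=
    setOf_lt_union_setOf_tendsto_atTop_eq hsa.dense_compl hsa.contOn
      (fun y hy => by rw [hW, hWm] at hy; exact hy.imp And.right And.right) b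
  have hVopen : IsOpen V := hV ▸ isOpen_setOfPred_eventually_nhdsWithin_set _
  have hWm_subset : Wm ⊆ {x | ∀ᶠ z in 𝓝[Wᶜ] x, ¬b < h z} := fun y hy =>
    ((hWm ▸ hy).2.eventually (eventually_le_atBot b)).mono fun _ => not_lt.2
  have hB_disjoint : Disjoint {x | ∀ᶠ z in 𝓝[Wᶜ] x, ¬b < h z} (closure V) :=
    (hV ▸ (hsa.dense_compl.disjoint_setOf_eventually_nhdsWithin_not _).symm).closure_right
      (isOpen_setOfPred_eventually_nhdsWithin_set _)
  have hclosure : IsClopen (closure V) :=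
    ⟨isClosed_closure, ExtremallyDisconnected.open_closure V hVopen⟩
  refine ⟨hVopen, hclosure.compl, fun x ⟨hxL, hxW⟩ =>
    not_lt.1 fun hb => hxL (subset_closure (Or.inl ⟨hxW, hb⟩)), ?_, ?_⟩
  · refine Subset.antisymm (fun y ⟨hyL, hyW⟩ => ?_) fun y hy => ⟨?_, (hWm ▸ hy).1⟩
    · rw [hW] at hyW
      exact hyW.resolve_left fun hp => hyL (subset_closure (Or.inr hp))
    · exact Set.disjoint_left.1 hB_disjoint (hWm_subset hy)
  · intro K hK hKb hKWp
    have hKV : Disjoint K V := Set.disjoint_left.2 fun x hxK hxV =>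
      hxV.elim (fun hxU => (hKb x ⟨hxK, hxU.1⟩).not_gt hxU.2)
        fun hxp => Set.eq_empty_iff_forall_notMem.1 hKWp x ⟨hxK, hxp⟩
    exact (hKV.closure_right hK.isOpen).subset_compl_right

/-- Claim from the proofs of Lemma 10 and Theorem 16(e): for a self-adjoint function `(h, W)`
with `W = W₊ ∪ W₋`, the set `Λ_b := Λ ∖ cl(U_b ∪ W₊)` is the largest clopen set on which
`h ≤ b` (in the extended sense), and it meets `W` exactly in `W₋`. -/
theorem selfAdjointFn_largest_clopen_level_set {Λ : Type*} [TopologicalSpace Λ]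
    [CompactSpace Λ] [T2Space Λ] [ExtremallyDisconnected Λ] [Nonempty Λ]
    (h : Λ → ℝ) (W : Set Λ) (hsa : IsSelfAdjointFn h W)
    (Wp Wm : Set Λ)
    (hWp : Wp = {y | y ∈ W ∧ Tendsto h (𝓝[Wᶜ] y) atTop})
    (hWm : Wm = {y | y ∈ W ∧ Tendsto h (𝓝[Wᶜ] y) atBot})
    (hW : W = Wp ∪ Wm) (b : ℝ) :
    let U := {x | x ∈ Wᶜ ∧ b < h x}
    let V := U ∪ Wp
    let Lb := (closure V)ᶜ
    IsOpen V ∧ IsClopen Lb ∧ (∀ x ∈ Lb \ W, h x ≤ b) ∧ Lb ∩ W = Wm ∧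
    (∀ K : Set Λ, IsClopen K → (∀ x ∈ K \ W, h x ≤ b) → K ∩ Wp = ∅ → K ⊆ Lb) :=
  selfAdjointFn_largest_clopen_level_set_general h W hsa Wp Wm hWp hWm hW b
end

section
/- Let Λ be an extremally disconnected compact Hausdorff space and let (f, W_f) be a normal function on Λ. Then the following are equivalent: (i) there exists a normal function (g, W_g) on Λ such that f(x)·g(x) = 1 and g(x)·f(x) = 1 for every x ∈ Λ∖(W_f ∪ W_g); (ii) there is no nonempty clopen subset C of Λ with C ∩ W_f = ∅ and f(x) = 0 for all x ∈ C. (function-level content of Note 34: invertibility of a normal function fails exactly when it vanishes on a nonvoid clopen set) -/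
open Filter Topology

/-!
If `f g = 1` off `W_f ∪ W_g`, then `f` cannot vanish on a nonempty open set disjoint from `W_f`,
because `W_g` has dense complement. Conversely, let `K` be the closure of the zero set of `f` in
`Λ ∖ W_f`. Since `|f| → ∞` at `W_f`, `K` misses `W_f`, and `f` vanishes on `K` by continuity. If `K`
had interior, the closure of that interior would be a nonempty clopen set (`Λ` is extremally
disconnected) on which `f` vanishes; so `K` is nowhere dense. Then `g := f⁻¹` off `W_f`, `g := 0`
on `W_f`, is a normal function with singular set `K`: it is continuous at `W_f` because `|f| → ∞`
there, and `|g| → ∞` at `K` because `f → 0` there.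
-/

open Set

namespace IsNormalFn

variable {Λ : Type*} [TopologicalSpace Λ] {f : Λ → Quaternion ℝ} {W : Set Λ}

def zeroLocus (f : Λ → Quaternion ℝ) (W : Set Λ) : Set Λ :=
  closure (Wᶜ ∩ f ⁻¹' {0})

noncomputable def inv (f : Λ → Quaternion ℝ) (W : Set Λ) : Λ → Quaternion ℝ :=
  Wᶜ.indicator f⁻¹

lemma isClosed_zeroLocus : IsClosed (zeroLocus f W) := isClosed_closure

lemma zeroLocus_subset_compl (hf : IsNormalFn f W) : zeroLocus f W ⊆ Wᶜ := by
  intro y hy hyW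
  have : (𝓝[Wᶜ ∩ f ⁻¹' {0}] y).NeBot := mem_closure_iff_nhdsWithin_neBot.mp hy
  have hlarge : ∀ᶠ x in 𝓝[Wᶜ ∩ f ⁻¹' {0}] y, 1 ≤ ‖f x‖ :=
    ((hf.tendsto_norm y hyW).mono_left (nhdsWithin_mono _ inter_subset_left)).eventually_ge_atTop 1
  obtain ⟨x, hx1, -, hx0⟩ := (hlarge.and self_mem_nhdsWithin).exists
  norm_num [show f x = 0 from hx0] at hx1

lemma eq_zero_of_mem_zeroLocus (hf : IsNormalFn f W) {y : Λ} (hy : y ∈ zeroLocus f W) :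
    f y = 0 := by
  have hcont : ContinuousWithinAt f (Wᶜ ∩ f ⁻¹' {0}) y :=
    (hf.contOn y (hf.zeroLocus_subset_compl hy)).mono inter_subset_left
  simpa using hcont.mem_closure (t := {0}) hy fun x hx => hx.2

lemma ne_zero_of_notMem_zeroLocus {x : Λ} (hxW : x ∉ W) (hx : x ∉ zeroLocus f W) : f x ≠ 0 :=
  fun h0 => hx (subset_closure ⟨hxW, h0⟩)

lemma dense_compl_zeroLocus [ExtremallyDisconnected Λ] (hf : IsNormalFn f W)
    (hno : ¬ ∃ C : Set Λ, C.Nonempty ∧ IsClopen C ∧ C ∩ W = ∅ ∧ ∀ x ∈ C, f x = 0) :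
    Dense (zeroLocus f W)ᶜ := by
  rw [← interior_eq_empty_iff_dense_compl, ← not_nonempty_iff_eq_empty]
  intro hint
  have hsub : closure (interior (zeroLocus f W)) ⊆ zeroLocus f W :=
    closure_minimal interior_subset isClosed_zeroLocus
  refine hno ⟨_, hint.closure, ⟨isClosed_closure,
    ExtremallyDisconnected.open_closure _ isOpen_interior⟩, ?_, fun x hx => ?_⟩
  · exact (subset_compl_iff_disjoint_right.mp (hsub.trans hf.zeroLocus_subset_compl)).inter_eq
  · exact hf.eq_zero_of_mem_zeroLocus (hsub hx)

lemma continuousAt_inv (hf : IsNormalFn f W) {y : Λ} (hy : y ∉ zeroLocus f W) :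
    ContinuousAt (inv f W) y := by
  by_cases hyW : y ∈ W
  · have hpole : Tendsto f⁻¹ (𝓝[Wᶜ] y) (𝓝 0) :=
      tendsto_inv₀_cobounded.comp (tendsto_norm_atTop_iff_cobounded.mp (hf.tendsto_norm y hyW))
    rw [ContinuousAt, inv, indicator_of_notMem (notMem_compl_iff.mpr hyW),
      nhds_eq_nhdsWithin_sup_nhdsWithin y (compl_union_self W).symm, tendsto_sup]
    constructor
    · refine hpole.congr' ?_
      filter_upwards [self_mem_nhdsWithin] with x hx
      exact (indicator_of_mem hx _).symm
    · refine tendsto_const_nhds.congr' ?_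
      filter_upwards [self_mem_nhdsWithin] with x hx
      exact (indicator_of_notMem (notMem_compl_iff.mpr hx) _).symm
  · have hfc : ContinuousAt f y := hf.contOn.continuousAt (hf.isOpen_compl.mem_nhds hyW)
    refine (hfc.inv₀ (ne_zero_of_notMem_zeroLocus hyW hy)).congr ?_
    filter_upwards [hf.isOpen_compl.mem_nhds hyW] with x hx
    exact (indicator_of_mem hx _).symm

lemma tendsto_norm_inv (hf : IsNormalFn f W) {y : Λ} (hy : y ∈ zeroLocus f W) :
    Tendsto (fun x => ‖inv f W x‖) (𝓝[(zeroLocus f W)ᶜ] y) atTop := by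
  have hyW : Wᶜ ∈ 𝓝 y := hf.isOpen_compl.mem_nhds (hf.zeroLocus_subset_compl hy)
  have hfy : Tendsto f (𝓝 y) (𝓝 0) :=
    hf.eq_zero_of_mem_zeroLocus hy ▸ hf.contOn.continuousAt hyW
  have hf_ne : Tendsto f (𝓝[(zeroLocus f W)ᶜ] y) (𝓝[≠] 0) := by
    refine tendsto_nhdsWithin_of_tendsto_nhds_of_eventually_within _
      (hfy.mono_left nhdsWithin_le_nhds) ?_
    filter_upwards [self_mem_nhdsWithin, mem_nhdsWithin_of_mem_nhds hyW] with x hxK hxW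
    exact ne_zero_of_notMem_zeroLocus hxW hxK
  refine (tendsto_norm_inv_nhdsNE_zero_atTop.comp hf_ne).congr' ?_
  filter_upwards [mem_nhdsWithin_of_mem_nhds hyW] with x hx
  simp [inv, indicator_of_mem hx]

lemma isNormalFn_inv (hf : IsNormalFn f W) (hd : Dense (zeroLocus f W)ᶜ) :
    IsNormalFn (inv f W) (zeroLocus f W) where
  isOpen_compl := isClosed_zeroLocus.isOpen_compl
  dense_compl := hd
  contOn := fun _ hy => (hf.continuousAt_inv hy).continuousWithinAt
  tendsto_norm := fun _ hy => hf.tendsto_norm_inv hy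

end IsNormalFn

theorem normalFn_invertible_iff_not_vanishing_on_clopen_general {Λ : Type*} [TopologicalSpace Λ]
    [ExtremallyDisconnected Λ]
    (f : Λ → Quaternion ℝ) (Wf : Set Λ) (hf : IsNormalFn f Wf) :
    (∃ (g : Λ → Quaternion ℝ) (Wg : Set Λ), IsNormalFn g Wg ∧
        ∀ x ∈ (Wf ∪ Wg)ᶜ, f x * g x = 1 ∧ g x * f x = 1) ↔
      ¬ ∃ C : Set Λ, C.Nonempty ∧ IsClopen C ∧ C ∩ Wf = ∅ ∧ ∀ x ∈ C, f x = 0 := by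
  constructor
  · rintro ⟨g, Wg, hg, hfg⟩ ⟨C, hC, hC_clopen, hCWf, hC0⟩
    obtain ⟨x, hxC, hxWg⟩ := hg.dense_compl.inter_open_nonempty C hC_clopen.isOpen hC
    have hxWf : x ∉ Wf := fun hxWf => hCWf.subset ⟨hxC, hxWf⟩
    have hfgx := (hfg x (compl_union Wf Wg ▸ ⟨hxWf, hxWg⟩)).1
    rw [hC0 x hxC, zero_mul] at hfgx
    exact zero_ne_one hfgx
  · intro hno
    refine ⟨IsNormalFn.inv f Wf, IsNormalFn.zeroLocus f Wf,
      hf.isNormalFn_inv (hf.dense_compl_zeroLocus hno), fun x hx => ?_⟩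
    rw [compl_union] at hx
    have hfx := IsNormalFn.ne_zero_of_notMem_zeroLocus hx.1 hx.2
    simp only [IsNormalFn.inv, indicator_of_mem hx.1, Pi.inv_apply]
    exact ⟨mul_inv_cancel₀ hfx, inv_mul_cancel₀ hfx⟩

/-- Note 34 (function level): a normal function has an inverse in the algebra of normal
functions if and only if it does not vanish on any nonempty clopen subset of its domain. -/
theorem normalFn_invertible_iff_not_vanishing_on_clopen {Λ : Type*} [TopologicalSpace Λ]
    [CompactSpace Λ] [T2Space Λ] [ExtremallyDisconnected Λ] [Nonempty Λ]
    (f : Λ → Quaternion ℝ) (Wf : Set Λ) (hf : IsNormalFn f Wf) :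
    (∃ (g : Λ → Quaternion ℝ) (Wg : Set Λ), IsNormalFn g Wg ∧
        ∀ x ∈ (Wf ∪ Wg)ᶜ, f x * g x = 1 ∧ g x * f x = 1) ↔
      ¬ ∃ C : Set Λ, C.Nonempty ∧ IsClopen C ∧ C ∩ Wf = ∅ ∧ ∀ x ∈ C, f x = 0 :=
  normalFn_invertible_iff_not_vanishing_on_clopen_general f Wf hf
end

section
/- Let Λ be an extremally disconnected compact Hausdorff space and let (f, W_f) and (g, W_g) be normal functions on Λ with W_f ∩ W_g = ∅. Then there exists a clopen subset C of Λ with W_f ⊆ C and C ∩ W_g = ∅ such that f is bounded on (Λ∖W_f)∖C and g is bounded on C∖W_g. (claim established in Note 53) -/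
open Filter Topology

/-! Separate the closed sets `W_f` and `W_g` by disjoint open sets; in an extremally disconnected
space the closure of the one around `W_f` is a clopen set `C` still avoiding `W_g`. Both `C` and
its complement are then compact, and each normal function is continuous, hence bounded, on the one
of them that misses its singular set. -/

theorem ExtremallyDisconnected.exists_isClopen_subset_disjoint {X : Type*} [TopologicalSpace X]
    [NormalSpace X] [ExtremallyDisconnected X] {s t : Set X} (hs : IsClosed s) (ht : IsClosed t)
    (hst : Disjoint s t) : ∃ C : Set X, IsClopen C ∧ s ⊆ C ∧ Disjoint C t := by
  obtain ⟨U, V, hU, hV, hsU, htV, hUV⟩ := normal_separation hs ht hst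
  exact ⟨closure U, ⟨isClosed_closure, ExtremallyDisconnected.open_closure U hU⟩,
    hsU.trans subset_closure, (hUV.closure_left hV).mono_right htV⟩

namespace IsNormalFn

variable {Λ : Type*} [TopologicalSpace Λ] {f : Λ → Quaternion ℝ} {W : Set Λ}

theorem isClosed (hf : IsNormalFn f W) : IsClosed W :=
  isOpen_compl_iff.1 hf.isOpen_compl

theorem exists_bound_of_isClosed_of_disjoint [CompactSpace Λ] (hf : IsNormalFn f W) {K : Set Λ}
    (hK : IsClosed K) (hKW : Disjoint K W) : ∃ M : ℝ, ∀ x ∈ K, ‖f x‖ ≤ M :=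
  hK.isCompact.exists_bound_of_continuousOn (hf.contOn.mono hKW.subset_compl_right)

end IsNormalFn

theorem normalFn_disjoint_singular_sets_clopen_separation_general {Λ : Type*} [TopologicalSpace Λ]
    [CompactSpace Λ] [T2Space Λ] [ExtremallyDisconnected Λ]
    (f g : Λ → Quaternion ℝ) (Wf Wg : Set Λ)
    (hf : IsNormalFn f Wf) (hg : IsNormalFn g Wg) (hdisj : Wf ∩ Wg = ∅) :
    ∃ C : Set Λ, IsClopen C ∧ Wf ⊆ C ∧ C ∩ Wg = ∅ ∧
      (∃ M : ℝ, ∀ x ∈ Wfᶜ \ C, ‖f x‖ ≤ M) ∧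
      (∃ M : ℝ, ∀ x ∈ C \ Wg, ‖g x‖ ≤ M) := by
  obtain ⟨C, hC, hWfC, hCWg⟩ := ExtremallyDisconnected.exists_isClopen_subset_disjoint
    hf.isClosed hg.isClosed (Set.disjoint_iff_inter_eq_empty.2 hdisj)
  obtain ⟨Mf, hMf⟩ := hf.exists_bound_of_isClosed_of_disjoint hC.compl.isClosed
    (Set.disjoint_compl_left_iff_subset.2 hWfC)
  obtain ⟨Mg, hMg⟩ := hg.exists_bound_of_isClosed_of_disjoint hC.isClosed hCWg
  exact ⟨C, hC, hWfC, hCWg.inter_eq, ⟨Mf, fun x hx => hMf x hx.2⟩, ⟨Mg, fun x hx => hMg x hx.1⟩⟩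

/-- Claim from Note 53: if two normal functions have disjoint singular sets, there is a clopen
set `C` containing `W_f` and disjoint from `W_g` such that `f` is bounded off `C` and `g` is
bounded on `C`. -/
theorem normalFn_disjoint_singular_sets_clopen_separation {Λ : Type*} [TopologicalSpace Λ]
    [CompactSpace Λ] [T2Space Λ] [ExtremallyDisconnected Λ] [Nonempty Λ]
    (f g : Λ → Quaternion ℝ) (Wf Wg : Set Λ)
    (hf : IsNormalFn f Wf) (hg : IsNormalFn g Wg) (hdisj : Wf ∩ Wg = ∅) :
    ∃ C : Set Λ, IsClopen C ∧ Wf ⊆ C ∧ C ∩ Wg = ∅ ∧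
      (∃ M : ℝ, ∀ x ∈ Wfᶜ \ C, ‖f x‖ ≤ M) ∧
      (∃ M : ℝ, ∀ x ∈ C \ Wg, ‖g x‖ ≤ M) :=
  normalFn_disjoint_singular_sets_clopen_separation_general f g Wf Wg hf hg hdisj
end

section
/- Let X be a real Hilbert space, let T be a closed densely defined linear operator in X, and let E be a bounding projection for T. Then E(X) ⊆ D(T*), the everywhere-defined operator T*E : x ↦ T*(Ex) is bounded, and E(T*y) = T*(Ey) for every y ∈ D(T*) (so E is a bounding projection for T*); moreover the adjoint of the bounded operator TE equals T*E, and E is also a bounding projection for the operators T*T and TT*. Furthermore, if (E_n) is a bounding sequence for T, then ⋃_n E_n(X) is a core for T, for T*, for T*T and for TT*. (Lemma 21, in the real Hilbert space setting) -/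
/-! If `E` is bounding for `T`, then for `x ∈ D(T)` we have
`⟪(TE)* y, x⟫ = ⟪y, E T x⟫ = ⟪E y, T x⟫`, so `E y ∈ D(T*)` and `T* E = (TE)*` is bounded.
A projection that is bounding for `S` and for `T` is bounding for `S T`, which covers `T*T`
and `TT*`. These composites are closed because `‖T x‖² = ⟪T*T x, x⟫` bounds `T` by the graph
norm of `T*T`. Finally `E_n → 1` strongly, and `(E_n x, E_n T x) = (E_n x, T E_n x)` is a graph
point over the union of the ranges converging to `(x, T x)`. -/

open scoped InnerProductSpace RealInnerProductSpace

namespace Stmt13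

variable {X : Type*} [NormedAddCommGroup X] [InnerProductSpace ℝ X] [CompleteSpace X]

/-- Composition `S ∘ T` of two partially defined operators, with domain
`{x ∈ D(T) : T x ∈ D(S)}`. -/
noncomputable def pComp (S T : X →ₗ.[ℝ] X) : X →ₗ.[ℝ] X where
  domain :=
  { carrier := {x | ∃ hx : x ∈ T.domain, T ⟨x, hx⟩ ∈ S.domain}
    add_mem' := by
      rintro x y ⟨hx, hx'⟩ ⟨hy, hy'⟩
      refine ⟨T.domain.add_mem hx hy, ?_⟩
      have e : (⟨x + y, T.domain.add_mem hx hy⟩ : T.domain) = ⟨x, hx⟩ + ⟨y, hy⟩ := rfl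
      rw [e, T.map_add]
      exact S.domain.add_mem hx' hy'
    zero_mem' := by
      refine ⟨T.domain.zero_mem, ?_⟩
      have e : (⟨(0 : X), T.domain.zero_mem⟩ : T.domain) = 0 := rfl
      rw [e, T.map_zero]
      exact S.domain.zero_mem
    smul_mem' := by
      rintro c x ⟨hx, hx'⟩
      refine ⟨T.domain.smul_mem c hx, ?_⟩
      have e : (⟨c • x, T.domain.smul_mem c hx⟩ : T.domain) = c • ⟨x, hx⟩ := rfl
      rw [e, T.map_smul]
      exact S.domain.smul_mem c hx' }
  toFun :=
  { toFun := fun x => S ⟨T ⟨x.1, x.2.choose⟩, x.2.choose_spec⟩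
    map_add' := by
      rintro x y
      have eT : T ⟨(x + y : _), (x + y).2.choose⟩ = T ⟨x.1, x.2.choose⟩ + T ⟨y.1, y.2.choose⟩ := by
        rw [show (⟨(x + y : _), (x + y).2.choose⟩ : T.domain)
            = ⟨x.1, x.2.choose⟩ + ⟨y.1, y.2.choose⟩ from Subtype.ext rfl, T.map_add]
      have eS : (⟨T ⟨(x + y : _), (x + y).2.choose⟩, (x + y).2.choose_spec⟩ : S.domain)
          = ⟨T ⟨x.1, x.2.choose⟩, x.2.choose_spec⟩ + ⟨T ⟨y.1, y.2.choose⟩, y.2.choose_spec⟩ :=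
        Subtype.ext eT
      show S _ = S _ + S _
      rw [eS, S.map_add]
    map_smul' := by
      rintro c x
      have eT : T ⟨(c • x : _), (c • x).2.choose⟩ = c • T ⟨x.1, x.2.choose⟩ := by
        rw [show (⟨(c • x : _), (c • x).2.choose⟩ : T.domain)
            = c • ⟨x.1, x.2.choose⟩ from Subtype.ext rfl, T.map_smul]
      have eS : (⟨T ⟨(c • x : _), (c • x).2.choose⟩, (c • x).2.choose_spec⟩ : S.domain)
          = c • ⟨T ⟨x.1, x.2.choose⟩, x.2.choose_spec⟩ :=
        Subtype.ext eT
      show S _ = c • S _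
      rw [eS, S.map_smul] }

/-- `E` is a bounding projection for the partially defined operator `T`: `E` is an orthogonal
projection whose range is contained in `D(T)`, the everywhere-defined operator `x ↦ T (E x)`
is bounded, and `T (E x) = E (T x)` for every `x ∈ D(T)`. -/
structure IsBoundingProjection (T : X →ₗ.[ℝ] X) (E : X →L[ℝ] X) : Prop where
  idem : IsIdempotentElem E
  selfAdjoint : IsSelfAdjoint E
  mem_domain : ∀ x, E x ∈ T.domain
  bounded : ∃ C : ℝ, ∀ x, ‖T ⟨E x, mem_domain x⟩‖ ≤ C * ‖x‖
  commutes : ∀ y : T.domain, E (T y) = T ⟨E y, mem_domain y⟩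

/-- A bounding sequence for `T`: an increasing (in range) sequence of bounding projections
whose ranges have dense union. -/
structure IsBoundingSequence (T : X →ₗ.[ℝ] X) (E : ℕ → X →L[ℝ] X) : Prop where
  bounding : ∀ n, IsBoundingProjection T (E n)
  mono : ∀ n, LinearMap.range (E n).toLinearMap ≤ LinearMap.range (E (n + 1)).toLinearMap
  dense_union : Dense (⋃ n, Set.range (E n))

open LinearPMap Filter Topology

section Composition

omit [CompleteSpace X]

variable {S T : X →ₗ.[ℝ] X}

lemma pComp_apply (x : (pComp S T).domain) :
    pComp S T x = S ⟨T ⟨x, x.2.1⟩, x.2.2⟩ := rfl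

lemma mem_graph_pComp {x z w : X} (hT : (x, z) ∈ T.graph) (hS : (z, w) ∈ S.graph) :
    (x, w) ∈ (pComp S T).graph := by
  obtain ⟨⟨z, hz⟩, rfl, rfl⟩ := (mem_graph_iff S).mp hS
  obtain ⟨⟨x, hx⟩, rfl, rfl⟩ := (mem_graph_iff T).mp hT
  exact (pComp S T).mem_graph ⟨x, hx, hz⟩

lemma sq_norm_le_of_isFormalAdjoint (h : S.IsFormalAdjoint T) (x : (pComp S T).domain) :
    ‖T ⟨x, x.2.1⟩‖ ^ 2 ≤ ‖pComp S T x‖ * ‖(x : X)‖ := by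
  rw [← real_inner_self_eq_norm_sq, ← h ⟨_, x.2.2⟩ ⟨x, x.2.1⟩]
  exact real_inner_le_norm _ _

lemma norm_le_norm_graph_of_isFormalAdjoint (h : S.IsFormalAdjoint T)
    (x : (pComp S T).domain) : ‖T ⟨x, x.2.1⟩‖ ≤ ‖((x : X), pComp S T x)‖ := by
  refine le_of_sq_le_sq ?_ (norm_nonneg _)
  calc ‖T ⟨x, x.2.1⟩‖ ^ 2 ≤ ‖pComp S T x‖ * ‖(x : X)‖ := sq_norm_le_of_isFormalAdjoint h x
    _ ≤ ‖((x : X), pComp S T x)‖ ^ 2 := by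
      rw [sq]
      exact mul_le_mul (norm_snd_le ((x : X), pComp S T x)) (norm_fst_le ((x : X), pComp S T x))
        (norm_nonneg _) (norm_nonneg _)

lemma pComp_isClosed [CompleteSpace X] (hS : S.IsClosed) (hT : T.IsClosed)
    (h : S.IsFormalAdjoint T) : (pComp S T).IsClosed := by
  refine IsSeqClosed.isClosed fun p q hp hpq => ?_
  choose x hx using fun n => (mem_graph_iff' _).mp (hp n)
  obtain rfl := funext fun n => (hx n).symm
  set y := fun n => T ⟨x n, (x n).2.1⟩
  have hy : CauchySeq y := by
    refine Metric.cauchySeq_iff.mpr fun ε hε => ?_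
    obtain ⟨N, hN⟩ := Metric.cauchySeq_iff.mp hpq.cauchySeq ε hε
    refine ⟨N, fun j hj k hk => (?_ : dist (y j) (y k) ≤ _).trans_lt (hN j hj k hk)⟩
    calc dist (y j) (y k) = ‖T ⟨(x j - x k : (pComp S T).domain), (x j - x k).2.1⟩‖ := by
          rw [dist_eq_norm, ← T.map_sub]; rfl
      _ ≤ _ := norm_le_norm_graph_of_isFormalAdjoint h (x j - x k)
      _ = _ := by rw [(pComp S T).map_sub, dist_eq_norm]; rfl
  obtain ⟨z, hz⟩ := cauchySeq_tendsto_of_complete hy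
  have hxT : (q.1, z) ∈ T.graph :=
    hT.mem_of_tendsto (hpq.fst_nhds.prodMk_nhds hz)
      (.of_forall fun n => T.mem_graph ⟨x n, (x n).2.1⟩)
  have hzS : (z, q.2) ∈ S.graph :=
    hS.mem_of_tendsto (hz.prodMk_nhds hpq.snd_nhds)
      (.of_forall fun n => S.mem_graph ⟨y n, (x n).2.2⟩)
  exact mem_graph_pComp hxT hzS

end Composition

namespace IsBoundingProjection

variable {S T : X →ₗ.[ℝ] X} {E : X →L[ℝ] X}

lemma inner_proj_left (hE : IsBoundingProjection T E) (x y : X) : ⟪E x, y⟫ = ⟪x, E y⟫ :=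
  hE.selfAdjoint.isSymmetric x y

lemma apply_apply (hE : IsBoundingProjection T E) (x : X) : E (E x) = E x :=
  DFunLike.congr_fun hE.idem x

noncomputable def compCLM (hE : IsBoundingProjection T E) : X →L[ℝ] X :=
  LinearMap.mkContinuousOfExistsBound
    { toFun := fun x => T ⟨E x, hE.mem_domain x⟩
      map_add' := fun x y => by
        rw [← T.map_add]
        exact congrArg T (Subtype.ext (map_add E x y))
      map_smul' := fun c x => by
        rw [RingHom.id_apply, ← T.map_smul]
        exact congrArg T (Subtype.ext (map_smul E c x)) }
    hE.bounded

lemma compCLM_apply (hE : IsBoundingProjection T E) (x : X) :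
    hE.compCLM x = T ⟨E x, hE.mem_domain x⟩ := rfl

lemma proj_compCLM_apply (hE : IsBoundingProjection T E) (x : X) :
    E (hE.compCLM x) = hE.compCLM x := by
  rw [compCLM_apply, hE.commutes]
  exact congrArg T (Subtype.ext (hE.apply_apply x))

lemma inner_adjoint_compCLM_apply (hE : IsBoundingProjection T E) (y : X) (x : T.domain) :
    ⟪ContinuousLinearMap.adjoint hE.compCLM y, (x : X)⟫ = ⟪E y, T x⟫ := by
  rw [ContinuousLinearMap.adjoint_inner_left, compCLM_apply, ← hE.commutes, hE.inner_proj_left]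

lemma mem_adjoint_domain (hE : IsBoundingProjection T E) (y : X) : E y ∈ T†.domain :=
  mem_adjoint_domain_of_exists _ ⟨_, hE.inner_adjoint_compCLM_apply y⟩

lemma adjoint_apply_proj (hT : Dense (T.domain : Set X)) (hE : IsBoundingProjection T E)
    (y : X) : T† ⟨E y, hE.mem_adjoint_domain y⟩ = ContinuousLinearMap.adjoint hE.compCLM y :=
  adjoint_apply_eq hT _ (hE.inner_adjoint_compCLM_apply y)

lemma adjoint (hT : Dense (T.domain : Set X)) (hE : IsBoundingProjection T E) :
    IsBoundingProjection T† E where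
  idem := hE.idem
  selfAdjoint := hE.selfAdjoint
  mem_domain := hE.mem_adjoint_domain
  bounded := ⟨_, fun y => by
    rw [hE.adjoint_apply_proj hT]
    exact (ContinuousLinearMap.adjoint hE.compCLM).le_opNorm y⟩
  commutes y := by
    rw [hE.adjoint_apply_proj hT]
    refine ext_inner_right ℝ fun v => ?_
    rw [hE.inner_proj_left, ContinuousLinearMap.adjoint_inner_left, compCLM_apply]
    exact adjoint_isFormalAdjoint hT y ⟨E v, hE.mem_domain v⟩

lemma mem_comp_domain (hS : IsBoundingProjection S E) (hT : IsBoundingProjection T E) (x : X) :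
    E x ∈ (pComp S T).domain :=
  ⟨hT.mem_domain x, by
    rw [← hT.compCLM_apply, ← hT.proj_compCLM_apply]
    exact hS.mem_domain _⟩

lemma comp_apply_proj (hS : IsBoundingProjection S E) (hT : IsBoundingProjection T E) (x : X)
    (hx : E x ∈ (pComp S T).domain) : pComp S T ⟨E x, hx⟩ = hS.compCLM (hT.compCLM x) :=
  congrArg S (Subtype.ext (hT.proj_compCLM_apply x).symm)

lemma comp (hS : IsBoundingProjection S E) (hT : IsBoundingProjection T E) :
    IsBoundingProjection (pComp S T) E where
  idem := hT.idem
  selfAdjoint := hT.selfAdjoint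
  mem_domain := mem_comp_domain hS hT
  bounded := ⟨_, fun x => by
    rw [comp_apply_proj hS hT]
    exact (hS.compCLM.comp hT.compCLM).le_opNorm x⟩
  commutes z := by
    rw [pComp_apply, hS.commutes]
    exact congrArg S (Subtype.ext (hT.commutes _))

end IsBoundingProjection

lemma tendsto_apply_of_isStarProjection {P : ℕ → X →L[ℝ] X} (hP : ∀ n, IsStarProjection (P n))
    (hmono : Monotone fun n => (P n).range)
    (hdense : Dense (⋃ n, Set.range (P n))) (x : X) :
    Tendsto (fun n => P n x) atTop (𝓝 x) := by
  choose _ hPeq using fun n => isStarProjection_iff_eq_starProjection_range.mp (hP n)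
  refine (Submodule.starProjection_tendsto_self _ hmono x ?_).congr fun n => by rw [← hPeq n]
  refine (Submodule.dense_iff_topologicalClosure_eq_top.mp (hdense.mono ?_)).ge
  exact Set.iUnion_subset fun n => le_iSup (fun n => (P n).range) n

section Core

variable {E F : Type*} [NormedAddCommGroup E] [NormedSpace ℝ E] [NormedAddCommGroup F]
  [NormedSpace ℝ F] {f : E →ₗ.[ℝ] F} {D : Submodule ℝ E}

lemma closure_domRestrict_eq_of_subset_closure (hf : f.IsClosed)
    (h : (f.graph : Set (E × F)) ⊆ closure (f.domRestrict D).graph) :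
    (f.domRestrict D).closure = f := by
  have hg : (f.domRestrict D).IsClosable := hf.isClosable.leIsClosable domRestrict_le
  refine eq_of_eq_graph (le_antisymm ?_ fun p hp => ?_)
  · rw [← hg.graph_closure_eq_closure_graph]
    exact Submodule.topologicalClosure_minimal _ (le_graph_of_le domRestrict_le) hf
  · rw [← hg.graph_closure_eq_closure_graph, ← SetLike.mem_coe,
      Submodule.topologicalClosure_coe]
    exact h hp

end Core

namespace IsBoundingSequence

variable {S T : X →ₗ.[ℝ] X} {P : ℕ → X →L[ℝ] X}

lemma adjoint (hT : Dense (T.domain : Set X)) (hP : IsBoundingSequence T P) :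
    IsBoundingSequence T† P :=
  ⟨fun n => (hP.bounding n).adjoint hT, hP.mono, hP.dense_union⟩

lemma comp (hS : IsBoundingSequence S P) (hT : IsBoundingSequence T P) :
    IsBoundingSequence (pComp S T) P :=
  ⟨fun n => (hS.bounding n).comp (hT.bounding n), hT.mono, hT.dense_union⟩

lemma tendsto_apply (hP : IsBoundingSequence T P) (x : X) :
    Tendsto (fun n => P n x) atTop (𝓝 x) :=
  tendsto_apply_of_isStarProjection
    (fun n => ⟨(hP.bounding n).idem, (hP.bounding n).selfAdjoint⟩)
    (monotone_nat_of_le_succ hP.mono) hP.dense_union x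

lemma closure_domRestrict_eq (hP : IsBoundingSequence T P) (hT : T.IsClosed) :
    (T.domRestrict (⨆ n, LinearMap.range (P n).toLinearMap)).closure = T := by
  refine closure_domRestrict_eq_of_subset_closure hT fun p hp => ?_
  obtain ⟨x, rfl⟩ := (mem_graph_iff' T).mp hp
  refine mem_closure_of_tendsto ((hP.tendsto_apply x).prodMk_nhds (hP.tendsto_apply (T x)))
    (.of_forall fun n => ?_)
  have hD : P n x ∈ ⨆ n, LinearMap.range (P n).toLinearMap :=
    Submodule.mem_iSup_of_mem n (LinearMap.mem_range_self _ _)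
  rw [(hP.bounding n).commutes]
  exact (T.domRestrict _).mem_graph ⟨P n x, hD, (hP.bounding n).mem_domain x⟩

end IsBoundingSequence

/-- Lemma 21 (real Hilbert space setting): a bounding projection for a closed densely defined
operator `T` is also bounding for `T*`, `T*T` and `TT*`; the adjoint of the bounded operator
`TE` is `T*E`; and the union of the ranges of a bounding sequence is a core for `T`, `T*`,
`T*T` and `TT*`. -/
theorem boundingProjection_adjoint (T : X →ₗ.[ℝ] X) (hTclosed : T.IsClosed)
    (hTdense : Dense (T.domain : Set X)) (E : X →L[ℝ] X)
    (hE : IsBoundingProjection T E) :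
    IsBoundingProjection T.adjoint E ∧
    (∀ (hmem : ∀ y, E y ∈ T.adjoint.domain) (x y : X),
      ⟪T ⟨E x, hE.mem_domain x⟩, y⟫ = ⟪x, T.adjoint ⟨E y, hmem y⟩⟫) ∧
    IsBoundingProjection (pComp T.adjoint T) E ∧
    IsBoundingProjection (pComp T T.adjoint) E ∧
    (∀ En : ℕ → X →L[ℝ] X, IsBoundingSequence T En →
      (T.domRestrict (⨆ n, LinearMap.range (En n).toLinearMap)).closure = T ∧
      (T.adjoint.domRestrict (⨆ n, LinearMap.range (En n).toLinearMap)).closure = T.adjoint ∧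
      ((pComp T.adjoint T).domRestrict
        (⨆ n, LinearMap.range (En n).toLinearMap)).closure = pComp T.adjoint T ∧
      ((pComp T T.adjoint).domRestrict
        (⨆ n, LinearMap.range (En n).toLinearMap)).closure = pComp T T.adjoint) := by
  have hTadj : T†.IsClosed := adjoint_isClosed hTdense
  refine ⟨hE.adjoint hTdense, fun hmem x y => ?_, (hE.adjoint hTdense).comp hE,
    hE.comp (hE.adjoint hTdense), fun P hP => ?_⟩
  · rw [hE.adjoint_apply_proj hTdense, ← hE.compCLM_apply,
      ContinuousLinearMap.adjoint_inner_right]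
  · have hPadj := hP.adjoint hTdense
    exact ⟨hP.closure_domRestrict_eq hTclosed, hPadj.closure_domRestrict_eq hTadj,
      (hPadj.comp hP).closure_domRestrict_eq
        (pComp_isClosed hTadj hTclosed (adjoint_isFormalAdjoint hTdense)),
      (hP.comp hPadj).closure_domRestrict_eq
        (pComp_isClosed hTclosed hTadj (adjoint_isFormalAdjoint hTdense).symm)⟩

end Stmt13
end

section
/- Let X be a real Hilbert space and let (E_n) be a sequence of orthogonal projections on X with increasing ranges (E_n(X) ⊆ E_{n+1}(X)) such that ℰ := ⋃_n E_n(X) is dense in X. Let G be a linear operator with domain ℰ such that for each n the everywhere-defined operator GE_n : x ↦ G(E_n x) is bounded and self-adjoint. Then G is closable and its closure is a self-adjoint operator. Moreover, if T is a closed operator with ℰ ⊆ D(T) such that ℰ is a core for T and TE_n : x ↦ T(E_n x) is a bounded self-adjoint operator for each n, then T is self-adjoint. (Lemma 6, in the real Hilbert space setting) -/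
/-!
The projections `E n` converge strongly to the identity, and the hypotheses make `G` symmetric,
so `G ≤ G†`. The point is the reverse inclusion `G† ≤ closure G`: for `y` in the domain of `G†`,
self-adjointness of `G E_n` and of `E_n` gives `G (E_n y) = E_n (G† y)`, so the graph points
`(E_n y, G (E_n y))` converge to `(y, G† y)`. As `G†` is closed, `G` is closable with
`closure G = G†`, and `(closure G)† = G† = closure G`. For `T`, apply this to the restriction of
`T` to `ℰ`, whose closure is `T`.
-/

open scoped InnerProductSpace
open Filter Topology

theorem Submodule.adjoint_topologicalClosure {𝕜 E F : Type*} [RCLike 𝕜] [NormedAddCommGroup E]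
    [InnerProductSpace 𝕜 E] [NormedAddCommGroup F] [InnerProductSpace 𝕜 F]
    (g : Submodule 𝕜 (E × F)) : g.topologicalClosure.adjoint = g.adjoint := by
  ext x
  simp only [mem_adjoint_iff]
  refine ⟨fun h a b hab => h a b (g.le_topologicalClosure hab), fun h a b hab => ?_⟩
  have hclosed : IsClosed {p : E × F | ⟪p.2, x.1⟫_𝕜 - ⟪p.1, x.2⟫_𝕜 = 0} :=
    isClosed_eq (by fun_prop) continuous_const
  exact closure_minimal (fun p hp => h p.1 p.2 hp) hclosed hab

theorem eventually_apply_eq_self {R M ι : Type*} [Semiring R] [TopologicalSpace M]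
    [AddCommMonoid M] [Module R M] [Preorder ι] [Nonempty ι] [IsDirected ι (· ≤ ·)]
    {E : ι → M →L[R] M} (hE : ∀ i, IsIdempotentElem (E i))
    (hmono : Monotone fun i => (E i : M →ₗ[R] M).range) {x : M}
    (hx : x ∈ ⨆ i, (E i : M →ₗ[R] M).range) : ∀ᶠ i in atTop, E i x = x := by
  obtain ⟨i, hi⟩ := (Submodule.mem_iSup_of_directed _ hmono.directed_le).1 hx
  filter_upwards [eventually_ge_atTop i] with j hj
  exact (LinearMap.IsIdempotentElem.mem_range_iff
    (ContinuousLinearMap.IsIdempotentElem.toLinearMap (hE j))).1 (hmono hj hi)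

theorem tendsto_apply_of_isStarProjection {𝕜 X ι : Type*} [RCLike 𝕜] [NormedAddCommGroup X]
    [InnerProductSpace 𝕜 X] [CompleteSpace X] [Preorder ι] {E : ι → X →L[𝕜] X}
    (hE : ∀ i, IsStarProjection (E i)) (hmono : Monotone fun i => (E i : X →ₗ[𝕜] X).range)
    (hdense : Dense (⋃ i, Set.range (E i))) (x : X) :
    Tendsto (fun i => E i x) atTop (𝓝 x) := by
  choose _ hEproj using fun i => isStarProjection_iff_eq_starProjection_range.1 (hE i)
  have htop : ⊤ ≤ (⨆ i, (E i : X →ₗ[𝕜] X).range).topologicalClosure := by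
    rw [top_le_iff, ← Submodule.dense_iff_topologicalClosure_eq_top]
    refine hdense.mono (Set.iUnion_subset fun i => ?_)
    rintro _ ⟨y, rfl⟩
    exact Submodule.mem_iSup_of_mem i ⟨y, rfl⟩
  convert Submodule.starProjection_tendsto_self _ hmono x htop using 2 with i
  exact congrArg (· x) (hEproj i)

namespace LinearPMap

section

variable {𝕜 E F : Type*} [RCLike 𝕜] [NormedAddCommGroup E] [InnerProductSpace 𝕜 E]
  [NormedAddCommGroup F] [InnerProductSpace 𝕜 F] [CompleteSpace E]

theorem adjoint_closure {T : E →ₗ.[𝕜] F} (hT : Dense (T.domain : Set E)) : T.closure† = T† := by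
  by_cases hc : T.IsClosable
  · have hT' : Dense (T.closure.domain : Set E) := hT.mono (le_closure T).1
    apply eq_of_eq_graph
    rw [adjoint_graph_eq_graph_adjoint hT', adjoint_graph_eq_graph_adjoint hT,
      ← hc.graph_closure_eq_closure_graph, Submodule.adjoint_topologicalClosure]
  · rw [closure_def' hc]

variable {T : E →ₗ.[𝕜] E} (hT : Dense (T.domain : Set E)) (hsym : T.IsFormalAdjoint T)
include hT hsym

theorem IsFormalAdjoint.isClosable : T.IsClosable :=
  isClosable_iff_exists_closed_extension.2 ⟨T†, adjoint_isClosed hT, hsym.le_adjoint hT⟩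

theorem isSelfAdjoint_closure_of_graph_adjoint_le (h : T†.graph ≤ T.graph.topologicalClosure) :
    IsSelfAdjoint T.closure := by
  have hclosure : T.closure = T† := by
    apply eq_of_eq_graph
    rw [← (hsym.isClosable hT).graph_closure_eq_closure_graph]
    refine le_antisymm ?_ h
    exact T.graph.topologicalClosure_minimal (le_graph_of_le (hsym.le_adjoint hT))
      (adjoint_isClosed hT)
  rw [isSelfAdjoint_def, adjoint_closure hT, hclosure]

end

variable {𝕜 X ι : Type*} [RCLike 𝕜] [NormedAddCommGroup X] [InnerProductSpace 𝕜 X]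
  [Preorder ι] [Nonempty ι] [IsDirected ι (· ≤ ·)] {E : ι → X →L[𝕜] X} {G : X →ₗ.[𝕜] X}
  (hGmem : ∀ i x, E i x ∈ G.domain)
include hGmem

theorem dense_domain_of_tendsto (htend : ∀ x, Tendsto (fun i => E i x) atTop (𝓝 x)) :
    Dense (G.domain : Set X) :=
  fun x => mem_closure_of_tendsto (htend x) (.of_forall fun i => hGmem i x)

variable (hGsym : ∀ i x y, ⟪G ⟨E i x, hGmem i x⟩, y⟫_𝕜 = ⟪x, G ⟨E i y, hGmem i y⟩⟫_𝕜)
include hGsym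

theorem isFormalAdjoint_self_of_isIdempotentElem (hE : ∀ i, IsIdempotentElem (E i))
    (hmono : Monotone fun i => (E i : X →ₗ[𝕜] X).range)
    (hGdom : G.domain ≤ ⨆ i, (E i : X →ₗ[𝕜] X).range) : G.IsFormalAdjoint G := by
  intro x y
  obtain ⟨i, hx, hy⟩ := ((eventually_apply_eq_self hE hmono (hGdom x.2)).and
    (eventually_apply_eq_self hE hmono (hGdom y.2))).exists
  have hGx : G ⟨E i x, hGmem i x⟩ = G x := congrArg G (Subtype.ext hx)
  have hGy : G ⟨E i y, hGmem i y⟩ = G y := congrArg G (Subtype.ext hy)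
  rw [← hGx, ← hGy]
  exact hGsym i x y

variable [CompleteSpace X]

theorem graph_adjoint_le_topologicalClosure_graph (hE : ∀ i, IsSelfAdjoint (E i))
    (htend : ∀ x, Tendsto (fun i => E i x) atTop (𝓝 x)) :
    G†.graph ≤ G.graph.topologicalClosure := by
  have hdense := dense_domain_of_tendsto hGmem htend
  rintro ⟨a, b⟩ hab
  obtain ⟨y, rfl, rfl⟩ := (mem_graph_iff _).1 hab
  have hcomm : ∀ i, G ⟨E i y, hGmem i y⟩ = E i (G† y) := fun i => ext_inner_right 𝕜 fun v => by
    rw [hGsym, ← adjoint_isFormalAdjoint hdense y ⟨E i v, hGmem i v⟩]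
    exact ((hE i).isSymmetric _ _).symm
  refine mem_closure_of_tendsto ((htend y).prodMk_nhds ((htend (G† y)).congr fun i => ?_))
    (.of_forall fun i => G.mem_graph ⟨E i y, hGmem i y⟩)
  exact (hcomm i).symm

theorem isClosable_and_isSelfAdjoint_closure_of_isStarProjection
    (hE : ∀ i, IsStarProjection (E i)) (hmono : Monotone fun i => (E i : X →ₗ[𝕜] X).range)
    (hdense : Dense (⋃ i, Set.range (E i))) (hGdom : G.domain ≤ ⨆ i, (E i : X →ₗ[𝕜] X).range) :
    G.IsClosable ∧ IsSelfAdjoint G.closure := by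
  have htend := tendsto_apply_of_isStarProjection hE hmono hdense
  have hGdense := dense_domain_of_tendsto hGmem htend
  have hsym := isFormalAdjoint_self_of_isIdempotentElem hGmem hGsym
    (fun i => (hE i).isIdempotentElem) hmono hGdom
  exact ⟨hsym.isClosable hGdense, isSelfAdjoint_closure_of_graph_adjoint_le hGdense hsym
    (graph_adjoint_le_topologicalClosure_graph hGmem hGsym (fun i => (hE i).isSelfAdjoint) htend)⟩

end LinearPMap

open scoped RealInnerProductSpace

namespace Stmt15

variable {X : Type*} [NormedAddCommGroup X] [InnerProductSpace ℝ X] [CompleteSpace X]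

theorem selfAdjoint_closure_of_boundingSequence_general (E : ℕ → X →L[ℝ] X)
    (hidem : ∀ n, IsIdempotentElem (E n)) (hsa : ∀ n, IsSelfAdjoint (E n))
    (hmono : ∀ n, LinearMap.range (E n).toLinearMap ≤ LinearMap.range (E (n + 1)).toLinearMap)
    (hdense : Dense (⋃ n, Set.range (E n)))
    (G : X →ₗ.[ℝ] X)
    (hGdom : G.domain = ⨆ n, LinearMap.range (E n).toLinearMap)
    (hGmem : ∀ n x, E n x ∈ G.domain)
    (hGsym : ∀ n x y, ⟪G ⟨E n x, hGmem n x⟩, y⟫ = ⟪x, G ⟨E n y, hGmem n y⟩⟫) :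
    (G.IsClosable ∧ G.closure.adjoint = G.closure) ∧
    (∀ T : X →ₗ.[ℝ] X, T.IsClosed →
      (⨆ n, LinearMap.range (E n).toLinearMap) ≤ T.domain →
      (T.domRestrict (⨆ n, LinearMap.range (E n).toLinearMap)).closure = T →
      ∀ hTmem : ∀ n x, E n x ∈ T.domain,
      (∀ n, ∃ C : ℝ, ∀ x, ‖T ⟨E n x, hTmem n x⟩‖ ≤ C * ‖x‖) →
      (∀ n x y, ⟪T ⟨E n x, hTmem n x⟩, y⟫ = ⟪x, T ⟨E n y, hTmem n y⟩⟫) →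
      T.adjoint = T) := by
  have hE : ∀ n, IsStarProjection (E n) := fun n => ⟨hidem n, hsa n⟩
  have hEmono := monotone_nat_of_le_succ hmono
  refine ⟨LinearPMap.isClosable_and_isSelfAdjoint_closure_of_isStarProjection hGmem hGsym hE
    hEmono hdense hGdom.le, ?_⟩
  intro T _ _ hcore hTmem _ hTsym
  have hmem : ∀ n x, E n x ∈ (T.domRestrict (⨆ n, LinearMap.range (E n).toLinearMap)).domain :=
    fun n x => ⟨Submodule.mem_iSup_of_mem n ⟨x, rfl⟩, hTmem n x⟩
  have hself := (LinearPMap.isClosable_and_isSelfAdjoint_closure_of_isStarProjection hmem hTsym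
    hE hEmono hdense inf_le_left).2
  rwa [hcore] at hself

/-- Lemma 6 (real Hilbert space setting): let `(E n)` be a sequence of orthogonal projections
with increasing ranges whose union `ℰ` is dense in `X`, and let `G` be a linear operator with
domain `ℰ` such that each everywhere-defined operator `x ↦ G (E n x)` is bounded and
self-adjoint. Then `G` is closable with self-adjoint closure. Moreover, any closed operator `T`
with `ℰ ⊆ D(T)` for which `ℰ` is a core and each `x ↦ T (E n x)` is bounded and self-adjoint
is itself self-adjoint. -/
theorem selfAdjoint_closure_of_boundingSequence (E : ℕ → X →L[ℝ] X)
    (hidem : ∀ n, IsIdempotentElem (E n)) (hsa : ∀ n, IsSelfAdjoint (E n))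
    (hmono : ∀ n, LinearMap.range (E n).toLinearMap ≤ LinearMap.range (E (n + 1)).toLinearMap)
    (hdense : Dense (⋃ n, Set.range (E n)))
    (G : X →ₗ.[ℝ] X)
    (hGdom : G.domain = ⨆ n, LinearMap.range (E n).toLinearMap)
    (hGmem : ∀ n x, E n x ∈ G.domain)
    (hGbdd : ∀ n, ∃ C : ℝ, ∀ x, ‖G ⟨E n x, hGmem n x⟩‖ ≤ C * ‖x‖)
    (hGsym : ∀ n x y, ⟪G ⟨E n x, hGmem n x⟩, y⟫ = ⟪x, G ⟨E n y, hGmem n y⟩⟫) :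
    (G.IsClosable ∧ G.closure.adjoint = G.closure) ∧
    (∀ T : X →ₗ.[ℝ] X, T.IsClosed →
      (⨆ n, LinearMap.range (E n).toLinearMap) ≤ T.domain →
      (T.domRestrict (⨆ n, LinearMap.range (E n).toLinearMap)).closure = T →
      ∀ hTmem : ∀ n x, E n x ∈ T.domain,
      (∀ n, ∃ C : ℝ, ∀ x, ‖T ⟨E n x, hTmem n x⟩‖ ≤ C * ‖x‖) →
      (∀ n x y, ⟪T ⟨E n x, hTmem n x⟩, y⟫ = ⟪x, T ⟨E n y, hTmem n y⟩⟫) →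
      T.adjoint = T) :=
  selfAdjoint_closure_of_boundingSequence_general E hidem hsa hmono hdense G hGdom hGmem hGsym

end Stmt15
end

section
/- Let Λ be an extremally disconnected compact Hausdorff space. For self-adjoint functions (f, W_f) and (g, W_g) on Λ write f ≤ g if f(x) ≤ g(x) for every x ∈ (Λ∖W_f) ∩ (Λ∖W_g). If (f_n)_{n≥1} is a sequence of self-adjoint functions on Λ admitting an upper bound, i.e. a self-adjoint function f_0 with f_n ≤ f_0 for all n ≥ 1, then the sequence has a least upper bound: there exists a self-adjoint function f on Λ with f_n ≤ f for all n ≥ 1, and f ≤ h for every self-adjoint function h on Λ satisfying f_n ≤ h for all n ≥ 1. (function-level content of Proposition 42) -/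
/-!
Composing with `arctan` turns a self-adjoint function into a bounded continuous function on a
dense open set, and on an extremally disconnected space such a function extends continuously
to `Λ`: its upper envelope `x ↦ limsup_{y → x} u y` is upper semicontinuous in general, and
lower semicontinuous because closures of open sets are open. The same envelope of the
(lower semicontinuous) pointwise supremum of the extended `arctan ∘ f n` is their least
continuous upper bound `G`. The least upper bound is then `tan ∘ G`, singular where
`G = ±π/2`; the upper bound `f₀` keeps `G` away from `±π/2` on a dense set.
-/

open Filter Topology

open Set Real

section UpperEnvelope

variable {Λ : Type*} [TopologicalSpace Λ] {U : Set Λ} {u : Λ → ℝ} {x : Λ}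

noncomputable def upperEnvelope (U : Set Λ) (u : Λ → ℝ) (x : Λ) : ℝ :=
  limsup u (𝓝[U] x)

lemma le_upperEnvelope (hb : IsBoundedUnder (· ≤ ·) (𝓝[U] x) u) (hx : x ∈ U) :
    u x ≤ upperEnvelope U u x :=
  le_limsup_of_frequently_le
    (frequently_iff.2 fun ht => ⟨x, mem_of_mem_nhdsWithin hx ht, le_rfl⟩) hb

lemma upperEnvelope_eq_of_continuousWithinAt (hx : x ∈ U) (hu : ContinuousWithinAt u U x) :
    upperEnvelope U u x = u x :=
  haveI := mem_closure_iff_nhdsWithin_neBot.1 (subset_closure hx)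
  hu.limsup_eq

lemma upperEnvelope_le_of_continuousAt [(𝓝[U] x).NeBot] {h : Λ → ℝ}
    (hb' : IsBoundedUnder (· ≥ ·) (𝓝[U] x) u) (hh : ContinuousAt h x)
    (hle : ∀ y ∈ U, u y ≤ h y) : upperEnvelope U u x ≤ h x := by
  have hh' : Tendsto h (𝓝[U] x) (𝓝 (h x)) := hh.tendsto.mono_left nhdsWithin_le_nhds
  calc upperEnvelope U u x ≤ limsup h (𝓝[U] x) :=
        limsup_le_limsup (eventually_nhdsWithin_of_forall hle) hb'.isCoboundedUnder_le
          hh'.isBoundedUnder_le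
    _ = h x := hh'.limsup_eq

lemma Dense.isCoboundedUnder_le_nhdsWithin (hUd : Dense U)
    (hb' : IsBoundedUnder (· ≥ ·) (𝓝[U] x) u) : IsCoboundedUnder (· ≤ ·) (𝓝[U] x) u :=
  haveI := mem_closure_iff_nhdsWithin_neBot.1 (hUd x)
  hb'.isCoboundedUnder_le

lemma upperSemicontinuous_upperEnvelope (hUd : Dense U)
    (hb : ∀ x, IsBoundedUnder (· ≤ ·) (𝓝[U] x) u)
    (hb' : ∀ x, IsBoundedUnder (· ≥ ·) (𝓝[U] x) u) :
    UpperSemicontinuous (upperEnvelope U u) := by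
  intro x c hxc
  obtain ⟨c', hxc', hc'c⟩ := exists_between hxc
  have hev := eventually_nhdsWithin_iff.1 (eventually_lt_of_limsup_lt hxc' (hb x))
  filter_upwards [hev.eventually_nhds] with y hy
  have hy' : upperEnvelope U u y ≤ c' :=
    limsup_le_of_le (hUd.isCoboundedUnder_le_nhdsWithin (hb' y))
      ((eventually_nhdsWithin_iff.2 hy).mono fun _ h => h.le)
  exact hy'.trans_lt hc'c

lemma ExtremallyDisconnected.lowerSemicontinuous_upperEnvelope [ExtremallyDisconnected Λ]
    (hUo : IsOpen U) (hUd : Dense U) (hu : LowerSemicontinuousOn u U)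
    (hb : ∀ x, IsBoundedUnder (· ≤ ·) (𝓝[U] x) u)
    (hb' : ∀ x, IsBoundedUnder (· ≥ ·) (𝓝[U] x) u) :
    LowerSemicontinuous (upperEnvelope U u) := by
  intro x c hcx
  obtain ⟨c', hcc', hc'x⟩ := exists_between hcx
  have hS_open : IsOpen (U ∩ u ⁻¹' Ioi c') := by
    obtain ⟨V, hV, hSV⟩ := lowerSemicontinuousOn_iff_preimage_Ioi.1 hu c'
    rw [hSV]
    exact hUo.inter hV
  set S := U ∩ u ⁻¹' Ioi c'
  have hxS : x ∈ closure S := by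
    have := frequently_lt_of_lt_limsup (hUd.isCoboundedUnder_le_nhdsWithin (hb' x)) hc'x
    rw [frequently_nhdsWithin_iff] at this
    exact mem_closure_iff_frequently.2 (this.mono fun y hy => ⟨hy.2, hy.1⟩)
  have hS_le : ∀ y ∈ closure S, c' ≤ upperEnvelope U u y := by
    intro y hy
    have : (𝓝[S] y).NeBot := mem_closure_iff_nhdsWithin_neBot.1 hy
    exact le_limsup_of_frequently_le
      ((eventually_nhdsWithin_of_forall (s := S) fun z hz => le_of_lt hz.2).frequently
        |>.filter_mono (nhdsWithin_mono _ inter_subset_left)) (hb y)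
  filter_upwards [(ExtremallyDisconnected.open_closure S hS_open).mem_nhds hxS] with y hy
  exact hcc'.trans_le (hS_le y hy)

theorem ExtremallyDisconnected.continuous_upperEnvelope [ExtremallyDisconnected Λ]
    (hUo : IsOpen U) (hUd : Dense U) (hu : LowerSemicontinuousOn u U)
    (hb : ∀ x, IsBoundedUnder (· ≤ ·) (𝓝[U] x) u)
    (hb' : ∀ x, IsBoundedUnder (· ≥ ·) (𝓝[U] x) u) :
    Continuous (upperEnvelope U u) :=
  continuous_iff_lower_upperSemicontinuous.2
    ⟨lowerSemicontinuous_upperEnvelope hUo hUd hu hb hb',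
      upperSemicontinuous_upperEnvelope hUd hb hb'⟩

theorem ExtremallyDisconnected.exists_continuousMap_eqOn [ExtremallyDisconnected Λ]
    (hUo : IsOpen U) (hUd : Dense U) (hu : ContinuousOn u U)
    (hb : ∀ x, IsBoundedUnder (· ≤ ·) (𝓝[U] x) u)
    (hb' : ∀ x, IsBoundedUnder (· ≥ ·) (𝓝[U] x) u) :
    ∃ g : C(Λ, ℝ), EqOn g u U :=
  ⟨⟨upperEnvelope U u, continuous_upperEnvelope hUo hUd hu.lowerSemicontinuousOn hb hb'⟩,
    fun _ hx => upperEnvelope_eq_of_continuousWithinAt hx (hu _ hx)⟩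

end UpperEnvelope

theorem ExtremallyDisconnected.exists_isLUB_range {Λ ι : Type*} [TopologicalSpace Λ]
    [ExtremallyDisconnected Λ] [Nonempty ι] {g : ι → C(Λ, ℝ)} (hg : BddAbove (range g)) :
    ∃ G : C(Λ, ℝ), IsLUB (range g) G := by
  obtain ⟨g₀, hg₀⟩ := hg
  obtain ⟨i₀⟩ := ‹Nonempty ι›
  have hle : ∀ i x, g i x ≤ g₀ x := fun i => hg₀ (mem_range_self i)
  have hbdd : ∀ x, BddAbove (range fun i => g i x) :=
    fun x => ⟨g₀ x, forall_mem_range.2 fun i => hle i x⟩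
  set u : Λ → ℝ := fun x => ⨆ i, g i x
  have hu_le : ∀ x, u x ≤ g₀ x := fun x => ciSup_le fun i => hle i x
  have le_hu : ∀ i x, g i x ≤ u x := fun i x => le_ciSup (hbdd x) i
  have hb : ∀ x, IsBoundedUnder (· ≤ ·) (𝓝[univ] x) u := fun x =>
    ((g₀.continuous.tendsto x).mono_left nhdsWithin_le_nhds).isBoundedUnder_le.mono_le
      (Eventually.of_forall hu_le)
  have hb' : ∀ x, IsBoundedUnder (· ≥ ·) (𝓝[univ] x) u := fun x =>
    (((g i₀).continuous.tendsto x).mono_left nhdsWithin_le_nhds).isBoundedUnder_ge.mono_ge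
      (Eventually.of_forall (le_hu i₀))
  have hu : LowerSemicontinuous u :=
    lowerSemicontinuous_ciSup hbdd fun i => (g i).continuous.lowerSemicontinuous
  refine ⟨⟨upperEnvelope univ u, continuous_upperEnvelope isOpen_univ dense_univ
    (hu.lowerSemicontinuousOn univ) hb hb'⟩, ?_, fun h hh x => ?_⟩
  · rintro _ ⟨i, rfl⟩ x
    exact (le_hu i x).trans (le_upperEnvelope (hb x) (mem_univ x))
  · have : (𝓝[univ] x).NeBot := by rw [nhdsWithin_univ]; infer_instance
    exact upperEnvelope_le_of_continuousAt (hb' x) h.continuous.continuousAt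
      fun y _ => ciSup_le fun i => hh (mem_range_self i) y

lemma Real.le_tan_iff_arctan_le {x y : ℝ} (hy : y ∈ Ioo (-(π / 2)) (π / 2)) :
    x ≤ tan y ↔ arctan x ≤ y := by
  rw [← arctan_le_arctan_iff, arctan_tan hy.1 hy.2]

lemma Real.tan_le_iff_le_arctan {x y : ℝ} (hy : y ∈ Ioo (-(π / 2)) (π / 2)) :
    tan y ≤ x ↔ y ≤ arctan x := by
  rw [← arctan_le_arctan_iff, arctan_tan hy.1 hy.2]

namespace IsSelfAdjointFn

variable {Λ : Type*} [TopologicalSpace Λ] {p q : Λ → ℝ} {Wp Wq : Set Λ}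

theorem exists_continuousMap_eqOn_arctan [ExtremallyDisconnected Λ]
    (hp : IsSelfAdjointFn p Wp) : ∃ g : C(Λ, ℝ), EqOn g (arctan ∘ p) Wpᶜ :=
  ExtremallyDisconnected.exists_continuousMap_eqOn hp.isOpen_compl hp.dense_compl
    (continuous_arctan.comp_continuousOn hp.contOn)
    (fun _ => isBoundedUnder_of ⟨π / 2, fun y => (arctan_lt_pi_div_two (p y)).le⟩)
    (fun _ => isBoundedUnder_of ⟨-(π / 2), fun y => (neg_pi_div_two_lt_arctan (p y)).le⟩)

theorem continuousMap_le_of_eqOn_arctan (hp : IsSelfAdjointFn p Wp)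
    (hq : IsSelfAdjointFn q Wq) {gp gq : C(Λ, ℝ)} (hgp : EqOn gp (arctan ∘ p) Wpᶜ)
    (hgq : EqOn gq (arctan ∘ q) Wqᶜ) (hpq : ∀ x ∈ Wpᶜ ∩ Wqᶜ, p x ≤ q x) : gp ≤ gq := fun x =>
  (hp.dense_compl.inter_of_isOpen_left hq.dense_compl hp.isOpen_compl).induction
    (P := fun x => gp x ≤ gq x)
    (fun y hy => (hgp hy.1).trans_le <|
      (arctan_le_arctan_iff.2 (hpq y hy)).trans_eq (hgq hy.2).symm)
    (isClosed_le gp.continuous gq.continuous) x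

end IsSelfAdjointFn

theorem isSelfAdjointFn_tan_comp {Λ : Type*} [TopologicalSpace Λ] {G : Λ → ℝ}
    (hG : Continuous G) (hD : Dense (G ⁻¹' Ioo (-(π / 2)) (π / 2))) :
    IsSelfAdjointFn (tan ∘ G) (G ⁻¹' Ioo (-(π / 2)) (π / 2))ᶜ := by
  set S := G ⁻¹' Ioo (-(π / 2)) (π / 2)
  refine ⟨?_, ?_, ?_, fun y hy => ?_⟩ <;> rw [compl_compl]
  · exact isOpen_Ioo.preimage hG
  · exact hD
  · exact fun x hx => ((continuousAt_tan.2 (cos_pos_of_mem_Ioo hx).ne').comp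
      hG.continuousAt).continuousWithinAt
  · have hGy : G y ∈ Icc (-(π / 2)) (π / 2) := by
      rw [← closure_Ioo (by linarith [pi_pos])]
      exact map_mem_closure hG (hD y) (mapsTo_preimage G _)
    have hcos : cos (G y) = 0 := by
      have : G y ∈ ({-(π / 2), π / 2} : Set ℝ) := by
        rw [← Icc_sdiff_Ioo_same (by linarith [pi_pos])]
        exact ⟨hGy, hy⟩
      rcases this with h | h
      · simp [h]
      · simp [mem_singleton_iff.1 h]
    refine (tendsto_abs_tan_of_cos_eq_zero hcos).comp (tendsto_nhdsWithin_iff.2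
      ⟨hG.continuousWithinAt, eventually_nhdsWithin_of_forall fun x hx => ?_⟩)
    exact ne_of_mem_of_not_mem (s := Ioo (-(π / 2)) (π / 2)) hx hy

theorem selfAdjointFn_exists_lub_general {Λ : Type*} [TopologicalSpace Λ]
    [ExtremallyDisconnected Λ]
    (f : ℕ → Λ → ℝ) (W : ℕ → Set Λ) (hf : ∀ n, IsSelfAdjointFn (f n) (W n))
    (f₀ : Λ → ℝ) (W₀ : Set Λ) (hf₀ : IsSelfAdjointFn f₀ W₀)
    (hub : ∀ n, ∀ x ∈ (W n)ᶜ ∩ W₀ᶜ, f n x ≤ f₀ x) :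
    ∃ (F : Λ → ℝ) (WF : Set Λ), IsSelfAdjointFn F WF ∧
      (∀ n, ∀ x ∈ (W n)ᶜ ∩ WFᶜ, f n x ≤ F x) ∧
      ∀ (h : Λ → ℝ) (Wh : Set Λ), IsSelfAdjointFn h Wh →
        (∀ n, ∀ x ∈ (W n)ᶜ ∩ Whᶜ, f n x ≤ h x) →
        ∀ x ∈ WFᶜ ∩ Whᶜ, F x ≤ h x := by
  choose g hg using fun n => (hf n).exists_continuousMap_eqOn_arctan
  obtain ⟨g₀, hg₀⟩ := hf₀.exists_continuousMap_eqOn_arctan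
  obtain ⟨G, hG⟩ := ExtremallyDisconnected.exists_isLUB_range
    ⟨g₀, forall_mem_range.2 fun n =>
      (hf n).continuousMap_le_of_eqOn_arctan hf₀ (hg n) hg₀ (hub n)⟩
  have hG_le : ∀ (h : Λ → ℝ) (Wh : Set Λ), IsSelfAdjointFn h Wh →
      (∀ n, ∀ x ∈ (W n)ᶜ ∩ Whᶜ, f n x ≤ h x) → ∀ x ∈ Whᶜ, G x ≤ arctan (h x) := by
    intro h Wh hh hfh x hx
    obtain ⟨H, hH⟩ := hh.exists_continuousMap_eqOn_arctan
    exact (hG.2 (forall_mem_range.2 fun n =>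
      (hf n).continuousMap_le_of_eqOn_arctan hh (hg n) hH (hfh n)) x).trans_eq (hH hx)
  refine ⟨tan ∘ G, _, isSelfAdjointFn_tan_comp G.continuous ?_, ?_, ?_⟩
  · refine ((hf 0).dense_compl.inter_of_isOpen_left hf₀.dense_compl (hf 0).isOpen_compl).mono
      fun x hx => ⟨?_, (hG_le f₀ W₀ hf₀ hub x hx.2).trans_lt (arctan_lt_pi_div_two _)⟩
    calc -(π / 2) < arctan (f 0 x) := neg_pi_div_two_lt_arctan _
      _ = g 0 x := (hg 0 hx.1).symm
      _ ≤ G x := hG.1 (mem_range_self 0) x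
  · rintro n x ⟨hxn, hxG⟩
    rw [compl_compl] at hxG
    exact (le_tan_iff_arctan_le hxG).2 ((hg n hxn).symm.trans_le (hG.1 (mem_range_self n) x))
  · rintro h Wh hh hfh x ⟨hxG, hxh⟩
    rw [compl_compl] at hxG
    exact (tan_le_iff_le_arctan hxG).2 (hG_le h Wh hh hfh x hxh)

/-- Proposition 42 (function level): a sequence of self-adjoint functions on `Λ` admitting an
upper bound admits a least upper bound, where `(f, W_f) ≤ (g, W_g)` means `f x ≤ g x` for all
`x ∈ (Λ∖W_f) ∩ (Λ∖W_g)`. -/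
theorem selfAdjointFn_exists_lub {Λ : Type*} [TopologicalSpace Λ]
    [CompactSpace Λ] [T2Space Λ] [ExtremallyDisconnected Λ] [Nonempty Λ]
    (f : ℕ → Λ → ℝ) (W : ℕ → Set Λ) (hf : ∀ n, IsSelfAdjointFn (f n) (W n))
    (f₀ : Λ → ℝ) (W₀ : Set Λ) (hf₀ : IsSelfAdjointFn f₀ W₀)
    (hub : ∀ n, ∀ x ∈ (W n)ᶜ ∩ W₀ᶜ, f n x ≤ f₀ x) :
    ∃ (F : Λ → ℝ) (WF : Set Λ), IsSelfAdjointFn F WF ∧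
      (∀ n, ∀ x ∈ (W n)ᶜ ∩ WFᶜ, f n x ≤ F x) ∧
      ∀ (h : Λ → ℝ) (Wh : Set Λ), IsSelfAdjointFn h Wh →
        (∀ n, ∀ x ∈ (W n)ᶜ ∩ Whᶜ, f n x ≤ h x) →
        ∀ x ∈ WFᶜ ∩ Whᶜ, F x ≤ h x :=
  selfAdjointFn_exists_lub_general f W hf f₀ W₀ hf₀ hub
end
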